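/- arXiv:2007.09406 — 10 statements merged into one kernel-verified Lean document; each statement's English description precedes it below -/
import Mathlib

section
/- Let M be an additive submonoid of the nonnegative rationals, and let (M_i)_{i≥1} be an increasing sequence of atomic submonoids of M with M = ∪_{i≥1} M_i and A(M_i) ⊆ A(M_{i+1}) for all i. Then M is atomic and A(M) = ∪_{i≥1} A(M_i). -/
open scoped NNRat ENNReal

/-- The set of atoms of a Puiseux monoid (additive submonoid of `ℚ≥0`). -/
def PMatoms (M : AddSubmonoid ℚ≥0) : Set ℚ≥0 :=
  {a | a ∈ M ∧ a ≠ 0 ∧ ∀ y ∈ M, ∀ z ∈ M, y ≠ 0 → z ≠ 0 → a ≠ y + z}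

/-- A Puiseux monoid is atomic if it is generated by its atoms. -/
def PMatomic (M : AddSubmonoid ℚ≥0) : Prop :=
  ∀ x ∈ M, x ∈ AddSubmonoid.closure (PMatoms M)

/-- The set of factorizations of `x` in `M`: multisets of atoms summing to `x`. -/
def PMfactorizations (M : AddSubmonoid ℚ≥0) (x : ℚ≥0) : Set (Multiset ℚ≥0) :=
  {s | (∀ a ∈ s, a ∈ PMatoms M) ∧ s.sum = x}

/-- The set of lengths of `x` in `M`. -/
def PMlengths (M : AddSubmonoid ℚ≥0) (x : ℚ≥0) : Set ℕ :=
  Multiset.card '' PMfactorizations M x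

/-- The elasticity of an element: `sup L(x) / inf L(x)` in `ℝ≥0∞`, `1` for `x = 0`. -/
noncomputable def PMelasticityOf (M : AddSubmonoid ℚ≥0) (x : ℚ≥0) : ℝ≥0∞ :=
  if x = 0 then 1
  else sSup ((fun n : ℕ => (n : ℝ≥0∞)) '' PMlengths M x) /
       sInf ((fun n : ℕ => (n : ℝ≥0∞)) '' PMlengths M x)

/-- The elasticity of a Puiseux monoid. -/
noncomputable def PMelasticity (M : AddSubmonoid ℚ≥0) : ℝ≥0∞ :=
  ⨆ x ∈ M, PMelasticityOf M x

/-- The union of sets of lengths containing `n`. -/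
def PMunionOfLengths (M : AddSubmonoid ℚ≥0) (n : ℕ) : Set ℕ :=
  {m | ∃ x : ℚ≥0, n ∈ PMlengths M x ∧ m ∈ PMlengths M x}

/-- The `n`-th local elasticity `ρ_n(M) = sup U_n(M)` in `ℝ≥0∞`. -/
noncomputable def PMlocalElasticity (M : AddSubmonoid ℚ≥0) (n : ℕ) : ℝ≥0∞ :=
  sSup ((fun m : ℕ => (m : ℝ≥0∞)) '' PMunionOfLengths M n)

/-- The set of distances of an element `x` of `M`. -/
def PMdistances (M : AddSubmonoid ℚ≥0) (x : ℚ≥0) : Set ℕ :=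
  {d | 0 < d ∧ ∃ l ∈ PMlengths M x,
    PMlengths M x ∩ Set.Icc l (l + d) = {l, l + d}}

/-- The set of distances (delta set) of `M`. -/
def PMDelta (M : AddSubmonoid ℚ≥0) : Set ℕ :=
  ⋃ x ∈ {y : ℚ≥0 | y ∈ M ∧ y ≠ 0}, PMdistances M x

/-- `(Mi)` is an approximation of `M`: an increasing sequence of atomic submonoids
with union `M` and increasing sets of atoms. -/
def PMapprox (M : AddSubmonoid ℚ≥0) (Mi : ℕ → AddSubmonoid ℚ≥0) : Prop :=
  (∀ i, Mi i ≤ Mi (i + 1)) ∧ (∀ i, PMatomic (Mi i)) ∧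
  (∀ i, PMatoms (Mi i) ⊆ PMatoms (Mi (i + 1))) ∧
  (∀ x, x ∈ M ↔ ∃ i, x ∈ Mi i)


lemma atoms_mono (Mi : ℕ → AddSubmonoid ℚ≥0)
    (h : ∀ i, PMatoms (Mi i) ⊆ PMatoms (Mi (i + 1))) :
    ∀ i j, i ≤ j → PMatoms (Mi i) ⊆ PMatoms (Mi j) := by
  intro i j hij
  induction j with
  | zero => simp_all
  | succ n ih =>
    rcases Nat.lt_or_ge i (n+1) with hlt | hge
    · exact (ih (Nat.lt_succ_iff.mp hlt)).trans (h n)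
    · have : i = n + 1 := le_antisymm hij hge
      subst this; exact fun _ ha => ha

theorem stmt0 (M : AddSubmonoid ℚ≥0) (Mi : ℕ → AddSubmonoid ℚ≥0)
    (h : PMapprox M Mi) :
    PMatomic M ∧ PMatoms M = ⋃ i, PMatoms (Mi i) := by
  obtain ⟨hmono, hatomic, hatoms, hunion⟩ := h
  have hMono : Monotone Mi := monotone_nat_of_le_succ hmono
  have hsub : ∀ i, Mi i ≤ M := fun i x hx => (hunion x).mpr ⟨i, hx⟩
  -- each atom of Mi i is an atom of M
  have key : ∀ i, PMatoms (Mi i) ⊆ PMatoms M := by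
    intro i a ha
    refine ⟨hsub i ha.1, ha.2.1, ?_⟩
    intro y hy z hz hy0 hz0
    obtain ⟨j, hj⟩ := (hunion y).mp hy
    obtain ⟨k, hk⟩ := (hunion z).mp hz
    set l := max i (max j k)
    have ha' : a ∈ PMatoms (Mi l) := atoms_mono Mi hatoms i l (le_max_left _ _) ha
    exact ha'.2.2 y (hMono ((le_max_left j k).trans (le_max_right i _)) hj)
      z (hMono ((le_max_right j k).trans (le_max_right i _)) hk) hy0 hz0
  -- each atom of M is an atom of some Mi i
  have key2 : PMatoms M ⊆ ⋃ i, PMatoms (Mi i) := by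
    intro a ha
    obtain ⟨i, hi⟩ := (hunion a).mp ha.1
    have hcl := hatomic i a hi
    obtain ⟨L, hL, hsum⟩ := AddSubmonoid.exists_list_of_mem_closure hcl
    match L, hL, hsum with
    | [], _, hsum => exact absurd hsum.symm ha.2.1
    | [b], hL, hsum =>
      simp only [List.sum_cons, List.sum_nil, add_zero] at hsum
      exact Set.mem_iUnion.mpr ⟨i, hsum ▸ hL b (by simp)⟩
    | b :: c :: L', hL, hsum =>
      exfalso
      have hb : b ∈ PMatoms (Mi i) := hL b (by simp)
      have hc : c ∈ PMatoms (Mi i) := hL c (by simp)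
      have hL' : ∀ x ∈ L', x ∈ M := fun x hx => hsub i (hL x (by simp [hx])).1
      have hmem : c + L'.sum ∈ M := M.add_mem (hsub i hc.1) (AddSubmonoid.list_sum_mem M hL')
      have hne : c + L'.sum ≠ 0 := by
        intro h0
        exact hc.2.1 ((add_eq_zero.mp h0).1)
      exact ha.2.2 b (hsub i hb.1) (c + L'.sum) hmem hb.2.1 hne
        (by rw [← hsum]; simp [add_assoc])
  constructor
  · intro x hx
    obtain ⟨i, hi⟩ := (hunion x).mp hx
    exact AddSubmonoid.closure_mono (key i) (hatomic i x hi)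
  · exact le_antisymm key2 (Set.iUnion_subset key)
end

section
/- Let M be a Puiseux monoid with an approximation (M_i)_{i≥1}, and let x ∈ M. Then there exists j ∈ ℕ such that x ∈ M_j and the set of factorizations of x in M equals the union over i ≥ j of the sets of factorizations of x in M_i. -/
open scoped NNRat ENNReal

lemma PMapprox.monoM {M : AddSubmonoid ℚ≥0} {Mi : ℕ → AddSubmonoid ℚ≥0}
    (h : PMapprox M Mi) : Monotone Mi :=
  monotone_nat_of_le_succ h.1

lemma PMapprox.monoA {M : AddSubmonoid ℚ≥0} {Mi : ℕ → AddSubmonoid ℚ≥0}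
    (h : PMapprox M Mi) {i k : ℕ} (hik : i ≤ k) :
    PMatoms (Mi i) ⊆ PMatoms (Mi k) :=
  monotone_nat_of_le_succ (f := fun i => PMatoms (Mi i)) h.2.2.1 hik

lemma PMapprox.atoms_subset {M : AddSubmonoid ℚ≥0} {Mi : ℕ → AddSubmonoid ℚ≥0}
    (h : PMapprox M Mi) (i : ℕ) : PMatoms (Mi i) ⊆ PMatoms M := by
  rintro a ⟨haM, ha0, hdec⟩
  refine ⟨(h.2.2.2 a).2 ⟨i, haM⟩, ha0, ?_⟩
  rintro y hy z hz hy0 hz0 hae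
  obtain ⟨k, hk⟩ := (h.2.2.2 y).1 hy
  obtain ⟨l, hl⟩ := (h.2.2.2 z).1 hz
  set m := max i (max k l)
  have ham : a ∈ PMatoms (Mi m) := h.monoA (le_max_left _ _) ⟨haM, ha0, hdec⟩
  exact ham.2.2 y (h.monoM ((le_max_left k l).trans (le_max_right i _)) hk)
    z (h.monoM ((le_max_right k l).trans (le_max_right i _)) hl) hy0 hz0 hae

lemma PMapprox.atom_mem {M : AddSubmonoid ℚ≥0} {Mi : ℕ → AddSubmonoid ℚ≥0}
    (h : PMapprox M Mi) {a : ℚ≥0} (ha : a ∈ PMatoms M) {i : ℕ} (hai : a ∈ Mi i) :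
    a ∈ PMatoms (Mi i) := by
  refine ⟨hai, ha.2.1, ?_⟩
  rintro y hy z hz hy0 hz0 hae
  exact ha.2.2 y ((h.2.2.2 y).2 ⟨i, hy⟩) z ((h.2.2.2 z).2 ⟨i, hz⟩) hy0 hz0 hae

theorem stmt1 (M : AddSubmonoid ℚ≥0) (Mi : ℕ → AddSubmonoid ℚ≥0)
    (h : PMapprox M Mi) (x : ℚ≥0) (hx : x ∈ M) :
    ∃ j : ℕ, x ∈ Mi j ∧
      PMfactorizations M x = ⋃ i ∈ Set.Ici j, PMfactorizations (Mi i) x := by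
  obtain ⟨j, hj⟩ := (h.2.2.2 x).1 hx
  refine ⟨j, hj, Set.Subset.antisymm ?_ ?_⟩
  · rintro s ⟨hs, hsum⟩
    have key : ∀ t : Multiset ℚ≥0, (∀ a ∈ t, a ∈ PMatoms M) →
        ∃ i, ∀ a ∈ t, a ∈ PMatoms (Mi i) := by
      intro t ht
      induction t using Multiset.induction with
      | empty => exact ⟨0, by simp⟩
      | cons a t ih =>
        obtain ⟨i, hi⟩ := ih (fun b hb => ht b (Multiset.mem_cons_of_mem hb))
        have haM := ht a (Multiset.mem_cons_self a t)
        obtain ⟨k, hk⟩ := (h.2.2.2 a).1 haM.1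
        refine ⟨max i k, ?_⟩
        intro b hb
        rcases Multiset.mem_cons.1 hb with rfl | hb
        · exact h.monoA (le_max_right i k) (h.atom_mem haM hk)
        · exact h.monoA (le_max_left i k) (hi b hb)
    obtain ⟨i, hi⟩ := key s hs
    refine Set.mem_biUnion (show max i j ∈ Set.Ici j from le_max_right i j) ?_
    exact ⟨fun a ha => h.monoA (le_max_left i j) (hi a ha), hsum⟩
  · rintro s hs
    obtain ⟨i, -, hsi, hsum⟩ := Set.mem_iUnion₂.1 hs
    exact ⟨fun a ha => h.atoms_subset i (hsi a ha), hsum⟩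
end

section
/- Let M be a Puiseux monoid with an approximation (M_i)_{i≥1}, and let x be a nonzero element of M with x ∈ M_j. Then the sequence (ρ_{M_{i+j}}(x))_{i≥1} is nondecreasing and converges (in ℝ ∪ {∞}) to ρ_M(x). -/
open scoped NNRat ENNReal

open Filter Topology

noncomputable def lengthSetElasticity (S : Set ℕ) : ℝ≥0∞ :=
  sSup ((Nat.cast : ℕ → ℝ≥0∞) '' S) / sInf ((Nat.cast : ℕ → ℝ≥0∞) '' S)

lemma one_le_sInf_natCast_image {S : Set ℕ} (h0 : 0 ∉ S) :
    1 ≤ sInf ((Nat.cast : ℕ → ℝ≥0∞) '' S) := by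
  refine le_sInf ?_
  rintro _ ⟨n, hn, rfl⟩
  exact Nat.one_le_cast.2 (Nat.one_le_iff_ne_zero.2 (ne_of_mem_of_not_mem hn h0))

section IncreasingUnion

variable {L : ℕ → Set ℕ}

lemma monotone_lengthSetElasticity (hL : Monotone L) :
    Monotone fun i => lengthSetElasticity (L i) := fun _ _ hik =>
  ENNReal.div_le_div (sSup_le_sSup (Set.image_mono (hL hik)))
    (sInf_le_sInf (Set.image_mono (hL hik)))

lemma tendsto_lengthSetElasticity_iUnion (hL : Monotone L) (h0 : 0 ∉ ⋃ i, L i) :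
    Tendsto (fun i => lengthSetElasticity (L i)) atTop
      (𝓝 (lengthSetElasticity (⋃ i, L i))) := by
  have hsup : Tendsto (fun i => sSup ((Nat.cast : ℕ → ℝ≥0∞) '' L i)) atTop
      (𝓝 (sSup ((Nat.cast : ℕ → ℝ≥0∞) '' ⋃ i, L i))) := by
    rw [Set.image_iUnion, sSup_iUnion]
    exact tendsto_atTop_iSup fun _ _ hik => sSup_le_sSup (Set.image_mono (hL hik))
  have hinf : Tendsto (fun i => sInf ((Nat.cast : ℕ → ℝ≥0∞) '' L i)) atTop
      (𝓝 (sInf ((Nat.cast : ℕ → ℝ≥0∞) '' ⋃ i, L i))) := by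
    have hanti : Antitone fun i => sInf ((Nat.cast : ℕ → ℝ≥0∞) '' L i) :=
      fun _ _ hik => sInf_le_sInf (Set.image_mono (hL hik))
    rw [Set.image_iUnion, sInf_eq_iInf, iInf_iUnion]
    simpa only [sInf_eq_iInf] using tendsto_atTop_iInf hanti
  -- The limiting infimum is at least `1`, and it is finite unless the union is empty,
  -- in which case the limiting supremum is `0`.
  refine ENNReal.Tendsto.div hsup
    (Or.inr (one_pos.trans_le (one_le_sInf_natCast_image h0)).ne') hinf ?_
  rcases (⋃ i, L i).eq_empty_or_nonempty with hempty | ⟨n, hn⟩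
  · simp [hempty]
  · exact Or.inl (ne_top_of_le_ne_top (ENNReal.natCast_ne_top n) (sInf_le ⟨n, hn, rfl⟩))

end IncreasingUnion

lemma PMelasticityOf_of_ne_zero (N : AddSubmonoid ℚ≥0) {x : ℚ≥0} (hx0 : x ≠ 0) :
    PMelasticityOf N x = lengthSetElasticity (PMlengths N x) :=
  if_neg hx0

lemma PMlengths_mono {N N' : AddSubmonoid ℚ≥0} (h : PMatoms N ⊆ PMatoms N') (x : ℚ≥0) :
    PMlengths N x ⊆ PMlengths N' x :=
  Set.image_mono fun _ ⟨hatoms, hsum⟩ => ⟨fun a ha => h (hatoms a ha), hsum⟩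

lemma zero_notMem_PMlengths (N : AddSubmonoid ℚ≥0) {x : ℚ≥0} (hx0 : x ≠ 0) :
    0 ∉ PMlengths N x := by
  rintro ⟨s, ⟨-, hsum⟩, hcard⟩
  rw [Multiset.card_eq_zero.1 hcard, Multiset.sum_zero] at hsum
  exact hx0 hsum.symm

namespace PMapprox

variable {M : AddSubmonoid ℚ≥0} {Mi : ℕ → AddSubmonoid ℚ≥0} (h : PMapprox M Mi)
include h

lemma monotone : Monotone Mi :=
  monotone_nat_of_le_succ h.1

lemma monotone_atoms : Monotone fun i => PMatoms (Mi i) :=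
  monotone_nat_of_le_succ h.2.2.1

lemma le (i : ℕ) : Mi i ≤ M :=
  fun _ hy => (h.2.2.2 _).2 ⟨i, hy⟩

lemma atoms_eq_iUnion : PMatoms M = ⋃ i, PMatoms (Mi i) := by
  ext a
  simp only [Set.mem_iUnion]
  constructor
  · rintro ⟨haM, ha0, hirr⟩
    obtain ⟨i, hai⟩ := (h.2.2.2 a).1 haM
    exact ⟨i, hai, ha0, fun y hy z hz => hirr y (h.le i hy) z (h.le i hz)⟩
  · rintro ⟨i, hai⟩
    refine ⟨h.le i hai.1, hai.2.1, ?_⟩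
    rintro y hy z hz hy0 hz0 rfl
    obtain ⟨k, hk⟩ := (h.2.2.2 y).1 hy
    obtain ⟨l, hl⟩ := (h.2.2.2 z).1 hz
    have hsum : y + z ∈ PMatoms (Mi (max i (max k l))) :=
      h.monotone_atoms (le_max_left _ _) hai
    exact hsum.2.2 y (h.monotone (by omega) hk) z (h.monotone (by omega) hl) hy0 hz0 rfl

/-- A factorization involves finitely many atoms, all of which are atoms of some `Mi i`. -/
lemma lengths_eq_iUnion (x : ℚ≥0) : PMlengths M x = ⋃ i, PMlengths (Mi i) x := by
  refine subset_antisymm ?_ (Set.iUnion_subset fun i =>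
    PMlengths_mono (h.atoms_eq_iUnion ▸ Set.subset_iUnion (fun k => PMatoms (Mi k)) i) x)
  rintro _ ⟨s, ⟨hatoms, hsum⟩, rfl⟩
  have hs : (s.toFinset : Set ℚ≥0) ⊆ ⋃ i, PMatoms (Mi i) := fun a ha =>
    h.atoms_eq_iUnion ▸ hatoms a (Multiset.mem_toFinset.1 ha)
  obtain ⟨i, hi⟩ :=
    h.monotone_atoms.directed_le.exists_mem_subset_of_finset_subset_biUnion hs
  exact Set.mem_iUnion.2 ⟨i, s, ⟨fun a ha => hi (Multiset.mem_toFinset.2 ha), hsum⟩, rfl⟩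

end PMapprox

theorem stmt3_general (M : AddSubmonoid ℚ≥0) (Mi : ℕ → AddSubmonoid ℚ≥0)
    (h : PMapprox M Mi) (x : ℚ≥0) (hx0 : x ≠ 0)
    (j : ℕ) :
    Monotone (fun i : ℕ => PMelasticityOf (Mi (i + j)) x) ∧
    Filter.Tendsto (fun i : ℕ => PMelasticityOf (Mi (i + j)) x) Filter.atTop
      (nhds (PMelasticityOf M x)) := by
  have hmono : Monotone fun i => PMlengths (Mi i) x :=
    fun _ _ hik => PMlengths_mono (h.monotone_atoms hik) x
  have hmono_add : Monotone fun i => PMlengths (Mi (i + j)) x :=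
    fun _ _ hik => hmono (Nat.add_le_add_right hik j)
  have hunion : ⋃ i, PMlengths (Mi (i + j)) x = PMlengths M x := by
    rw [hmono.iUnion_nat_add j, h.lengths_eq_iUnion]
  simp only [PMelasticityOf_of_ne_zero _ hx0, ← hunion]
  exact ⟨monotone_lengthSetElasticity hmono_add, tendsto_lengthSetElasticity_iUnion hmono_add
    (hunion ▸ zero_notMem_PMlengths M hx0)⟩

theorem stmt3 (M : AddSubmonoid ℚ≥0) (Mi : ℕ → AddSubmonoid ℚ≥0)
    (h : PMapprox M Mi) (x : ℚ≥0) (hx : x ∈ M) (hx0 : x ≠ 0)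
    (j : ℕ) (hj : x ∈ Mi j) :
    Monotone (fun i : ℕ => PMelasticityOf (Mi (i + j)) x) ∧
    Filter.Tendsto (fun i : ℕ => PMelasticityOf (Mi (i + j)) x) Filter.atTop
      (nhds (PMelasticityOf M x)) :=
  stmt3_general M Mi h x hx0 j
end

section
/- Let M be an atomic Puiseux monoid. If 0 is a limit point of M \ {0}, then ρ(M) = ∞. -/
open scoped NNRat ENNReal

/-! Atoms accumulate at `0`: pick an atom `a` and an atom `b` with `n * b ≤ a`. Clearing
denominators gives `k • a = m • b` with `n * k ≤ m`, so `k • a` has factorizations of lengths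
`k` and `m` and elasticity at least `n`. -/

lemma exists_mem_PMatoms_le (M : AddSubmonoid ℚ≥0) (hM : PMatomic M) {x : ℚ≥0} (hx : x ∈ M)
    (hx0 : x ≠ 0) : ∃ a ∈ PMatoms M, a ≤ x := by
  obtain ⟨l, hl, rfl⟩ := AddSubmonoid.exists_multiset_of_mem_closure (hM x hx)
  obtain ⟨a, ha⟩ := Multiset.exists_mem_of_ne_zero (s := l) (by rintro rfl; exact hx0 rfl)
  exact ⟨a, hl a ha, Multiset.single_le_sum (fun _ _ => zero_le) a ha⟩

lemma exists_mem_PMatoms_lt (M : AddSubmonoid ℚ≥0) (hM : PMatomic M)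
    (h0 : ∀ ε : ℚ≥0, 0 < ε → ∃ x ∈ M, x ≠ 0 ∧ x < ε) {ε : ℚ≥0} (hε : 0 < ε) :
    ∃ a ∈ PMatoms M, a < ε := by
  obtain ⟨x, hx, hx0, hxε⟩ := h0 ε hε
  obtain ⟨a, ha, hax⟩ := exists_mem_PMatoms_le M hM hx hx0
  exact ⟨a, ha, hax.trans_lt hxε⟩

lemma mem_PMlengths_nsmul (M : AddSubmonoid ℚ≥0) {a : ℚ≥0} (ha : a ∈ PMatoms M) (k : ℕ) :
    k ∈ PMlengths M (k • a) := by
  refine ⟨Multiset.replicate k a, ⟨fun b hb => ?_, by simp⟩, Multiset.card_replicate k a⟩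
  rwa [Multiset.eq_of_mem_replicate hb]

lemma div_le_PMelasticityOf (M : AddSubmonoid ℚ≥0) {x : ℚ≥0} (hx : x ≠ 0) {k m : ℕ}
    (hk : k ∈ PMlengths M x) (hm : m ∈ PMlengths M x) :
    (m : ℝ≥0∞) / k ≤ PMelasticityOf M x := by
  rw [PMelasticityOf, if_neg hx]
  exact ENNReal.div_le_div (le_sSup ⟨m, hm, rfl⟩) (sInf_le ⟨k, hk, rfl⟩)

lemma PMelasticityOf_le_PMelasticity (M : AddSubmonoid ℚ≥0) {x : ℚ≥0} (hx : x ∈ M) :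
    PMelasticityOf M x ≤ PMelasticity M :=
  le_iSup₂ (f := fun x (_ : x ∈ M) => PMelasticityOf M x) x hx

lemma NNRat.exists_nsmul_eq_nsmul_of_mul_le {a b : ℚ≥0} (hb : b ≠ 0) {n : ℕ} (hab : n * b ≤ a) :
    ∃ k m : ℕ, k ≠ 0 ∧ n * k ≤ m ∧ k • a = m • b := by
  set k := b.num * a.den
  set m := a.num * b.den
  have hkm : (k : ℚ≥0) * a = m * b := by
    simp only [k, m]
    push_cast
    rw [mul_assoc, mul_assoc, NNRat.den_mul_eq_num, NNRat.den_mul_eq_num, mul_comm]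
  refine ⟨k, m, by positivity, ?_, by simpa only [nsmul_eq_mul] using hkm⟩
  have : ((n * k : ℕ) : ℚ≥0) * b ≤ (m : ℚ≥0) * b :=
    calc ((n * k : ℕ) : ℚ≥0) * b = k * (n * b) := by push_cast; ring
      _ ≤ k * a := by gcongr
      _ = m * b := hkm
  exact_mod_cast le_of_mul_le_mul_right this (pos_iff_ne_zero.mpr hb)

lemma natCast_le_PMelasticity (M : AddSubmonoid ℚ≥0) {a b : ℚ≥0} (ha : a ∈ PMatoms M)
    (hb : b ∈ PMatoms M) {n : ℕ} (hab : n * b ≤ a) : (n : ℝ≥0∞) ≤ PMelasticity M := by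
  obtain ⟨k, m, hk0, hnkm, hkm⟩ := NNRat.exists_nsmul_eq_nsmul_of_mul_le hb.2.1 hab
  have hx0 : k • a ≠ 0 := smul_ne_zero hk0 ha.2.1
  have hm : m ∈ PMlengths M (k • a) := hkm ▸ mem_PMlengths_nsmul M hb m
  calc (n : ℝ≥0∞) ≤ (m : ℝ≥0∞) / k := by
        rw [ENNReal.le_div_iff_mul_le (by exact_mod_cast Or.inl hk0)
          (Or.inl (ENNReal.natCast_ne_top k))]
        exact_mod_cast hnkm
    _ ≤ PMelasticityOf M (k • a) :=
        div_le_PMelasticityOf M hx0 (mem_PMlengths_nsmul M ha k) hm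
    _ ≤ PMelasticity M :=
        PMelasticityOf_le_PMelasticity M (AddSubmonoid.nsmul_mem M ha.1 k)

theorem stmt6 (M : AddSubmonoid ℚ≥0) (hM : PMatomic M)
    (h0 : ∀ ε : ℚ≥0, 0 < ε → ∃ x ∈ M, x ≠ 0 ∧ x < ε) :
    PMelasticity M = ⊤ := by
  refine ENNReal.eq_top_of_forall_nnreal_le fun r => ?_
  obtain ⟨a, ha, -⟩ := exists_mem_PMatoms_lt M hM h0 one_pos
  have ha0 : 0 < a := pos_iff_ne_zero.mpr ha.2.1
  obtain ⟨b, hb, hba⟩ := exists_mem_PMatoms_lt M hM h0 (ε := a / (⌈r⌉₊ + 1)) (by positivity)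
  have hab : ⌈r⌉₊ * b ≤ a := by
    rw [lt_div_iff₀ (by positivity)] at hba
    calc ⌈r⌉₊ * b ≤ b * (⌈r⌉₊ + 1) := by rw [mul_comm]; gcongr; exact le_self_add
      _ ≤ a := hba.le
  calc (r : ℝ≥0∞) ≤ ⌈r⌉₊ := by exact_mod_cast Nat.le_ceil r
    _ ≤ PMelasticity M := natCast_le_PMelasticity M ha hb hab
end

section
/- Let M be an atomic Puiseux monoid containing a stable atom a. Then ρ_k(M) = ∞ for all sufficiently large k; in particular ρ_{d(a)}(M) = ∞, where d(a) is the denominator of a in lowest terms. -/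
open scoped NNRat ENNReal

lemma aux_den_mul (q : ℚ≥0) : (q.den : ℚ≥0) * q = (q.num : ℚ≥0) := by
  have h : (q.den : ℚ≥0) ≠ 0 := Nat.cast_ne_zero.mpr q.den_pos.ne'
  calc (q.den : ℚ≥0) * q = (q.den : ℚ≥0) * ((q.num : ℚ≥0) / q.den) := by
        rw [NNRat.num_div_den]
      _ = q.num := by rw [mul_comm, div_mul_cancel₀ _ h]

theorem stmt9 (M : AddSubmonoid ℚ≥0) (hM : PMatomic M)
    (a : ℚ≥0) (ha : a ∈ PMatoms M)
    (hstable : {b ∈ PMatoms M | b.num = a.num}.Infinite) :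
    (∃ K : ℕ, ∀ k ≥ K, PMlocalElasticity M k = ⊤) ∧
      PMlocalElasticity M a.den = ⊤ := by
  obtain ⟨haM, ha0, hat⟩ := ha
  have key : ∀ k ≥ a.den, PMlocalElasticity M k = ⊤ := by
    intro k hk
    rw [PMlocalElasticity, sSup_eq_top]
    intro c hc
    obtain ⟨n, hn⟩ := ENNReal.exists_nat_gt hc.ne
    have hinj : Set.InjOn NNRat.den {b ∈ PMatoms M | b.num = a.num} := by
      intro b hb b' hb' h
      have h2 : (b.num : ℚ≥0) / b.den = (b'.num : ℚ≥0) / b'.den := by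
        rw [hb.2, hb'.2, h]
      rwa [NNRat.num_div_den, NNRat.num_div_den] at h2
    have himg := hstable.image hinj
    obtain ⟨b, hbS, hbden⟩ : ∃ b ∈ {b ∈ PMatoms M | b.num = a.num}, n < b.den := by
      by_contra h
      push_neg at h
      have hsub : NNRat.den '' {b ∈ PMatoms M | b.num = a.num} ⊆ Set.Iic n := by
        rintro _ ⟨b, hb, rfl⟩; exact h b hb
      exact himg ((Set.finite_Iic n).subset hsub)
    have hbb : b.den • b = a.den • a := by
      rw [nsmul_eq_mul, nsmul_eq_mul, aux_den_mul, aux_den_mul, hbS.2]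
    refine ⟨((k - a.den + b.den : ℕ) : ℝ≥0∞), ⟨k - a.den + b.den, ?_, rfl⟩, ?_⟩
    · refine ⟨(k : ℚ≥0) * a,
        ⟨Multiset.replicate k a, ⟨?_, ?_⟩, Multiset.card_replicate _ _⟩,
        ⟨Multiset.replicate (k - a.den) a + Multiset.replicate b.den b, ⟨?_, ?_⟩, ?_⟩⟩
      · intro c hc; rw [Multiset.eq_of_mem_replicate hc]; exact ⟨haM, ha0, hat⟩
      · rw [Multiset.sum_replicate, nsmul_eq_mul]
      · intro c hc
        rcases Multiset.mem_add.mp hc with h' | h'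
        · rw [Multiset.eq_of_mem_replicate h']; exact ⟨haM, ha0, hat⟩
        · rw [Multiset.eq_of_mem_replicate h']; exact hbS.1
      · rw [Multiset.sum_add, Multiset.sum_replicate, Multiset.sum_replicate, hbb,
          ← add_nsmul, Nat.sub_add_cancel hk, nsmul_eq_mul]
      · simp [Multiset.card_replicate]
    · calc c < (n : ℝ≥0∞) := hn
        _ ≤ _ := by exact_mod_cast hbden.le.trans (Nat.le_add_left _ _)
  exact ⟨⟨a.den, key⟩, key a.den le_rfl⟩
end

section
/- Let M be a Puiseux monoid with an approximation (M_i)_{i≥1}, and let x ∈ M be nonzero. Then Δ_M(x) ⊆ liminf_{i→∞} Δ_{M_i}(x), i.e., every d ∈ Δ_M(x) lies in Δ_{M_j}(x) for all sufficiently large j. -/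
open scoped NNRat ENNReal

theorem stmt10 (M : AddSubmonoid ℚ≥0) (Mi : ℕ → AddSubmonoid ℚ≥0)
    (h : PMapprox M Mi) (x : ℚ≥0) (hx : x ∈ M) (hx0 : x ≠ 0) :
    PMdistances M x ⊆ ⋃ i, ⋂ j ∈ Set.Ici i, PMdistances (Mi j) x := by
  obtain ⟨hmono, _hat, hatoms, hun⟩ := h
  have hMi : Monotone Mi := monotone_nat_of_le_succ hmono
  have hAmono : ∀ i j, i ≤ j → PMatoms (Mi i) ⊆ PMatoms (Mi j) := by
    intro i j hij
    induction hij with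
    | refl => exact le_refl _
    | step _ ih => exact fun a ha => hatoms _ (ih ha)
  have hle : ∀ i, Mi i ≤ M := fun i y hy => (hun y).2 ⟨i, hy⟩
  have hAsub : ∀ i, PMatoms (Mi i) ⊆ PMatoms M := by
    rintro i a ⟨haM, ha0, hirr⟩
    refine ⟨hle i haM, ha0, ?_⟩
    intro y hy z hz hy0 hz0 heq
    obtain ⟨jy, hjy⟩ := (hun y).1 hy
    obtain ⟨jz, hjz⟩ := (hun z).1 hz
    have hak : a ∈ PMatoms (Mi (max i (max jy jz))) :=
      hAmono i _ (le_max_left _ _) ⟨haM, ha0, hirr⟩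
    exact hak.2.2 y (hMi (le_trans (le_max_left _ _) (le_max_right i _)) hjy)
      z (hMi (le_trans (le_max_right _ _) (le_max_right i _)) hjz) hy0 hz0 heq
  have hArev : ∀ i, ∀ a ∈ PMatoms M, a ∈ Mi i → a ∈ PMatoms (Mi i) := by
    rintro i a ⟨_, ha0, hirr⟩ hai
    exact ⟨hai, ha0, fun y hy z hz => hirr y (hle i hy) z (hle i hz)⟩
  have hLsub : ∀ i, PMlengths (Mi i) x ⊆ PMlengths M x := by
    rintro i n ⟨s, ⟨hs1, hs2⟩, hcard⟩
    exact ⟨s, ⟨fun a ha => hAsub i (hs1 a ha), hs2⟩, hcard⟩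
  have key : ∀ s : Multiset ℚ≥0, (∀ a ∈ s, a ∈ M) → ∃ i, ∀ a ∈ s, a ∈ Mi i := by
    intro s
    induction s using Multiset.induction with
    | empty => exact fun _ => ⟨0, fun a ha => absurd ha (Multiset.notMem_zero a)⟩
    | cons b t ih =>
      intro hs
      obtain ⟨i1, hi1⟩ := ih (fun a ha => hs a (Multiset.mem_cons_of_mem ha))
      obtain ⟨i2, hi2⟩ := (hun b).1 (hs b (Multiset.mem_cons_self b t))
      refine ⟨max i1 i2, fun a ha => ?_⟩
      rcases Multiset.mem_cons.mp ha with rfl | ha'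
      · exact hMi (le_max_right _ _) hi2
      · exact hMi (le_max_left _ _) (hi1 a ha')
  have hLev : ∀ l ∈ PMlengths M x, ∃ i, ∀ j, i ≤ j → l ∈ PMlengths (Mi j) x := by
    rintro l ⟨s, ⟨hs1, hs2⟩, hcard⟩
    obtain ⟨i, hi⟩ := key s (fun a ha => (hs1 a ha).1)
    refine ⟨i, fun j hij => ?_⟩
    exact ⟨s, ⟨fun a ha => hArev j a (hs1 a ha) (hMi hij (hi a ha)), hs2⟩, hcard⟩
  rintro d ⟨hd0, l, hl, hicc⟩
  have hld : l + d ∈ PMlengths M x := by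
    have h2 : l + d ∈ ({l, l + d} : Set ℕ) := Or.inr rfl
    rw [← hicc] at h2
    exact h2.1
  obtain ⟨i1, hi1⟩ := hLev l hl
  obtain ⟨i2, hi2⟩ := hLev (l + d) hld
  refine Set.mem_iUnion.mpr ⟨max i1 i2, Set.mem_iInter₂.mpr fun j hj => ?_⟩
  have hj1 : i1 ≤ j := le_trans (le_max_left _ _) hj
  have hj2 : i2 ≤ j := le_trans (le_max_right _ _) hj
  refine ⟨hd0, l, hi1 j hj1, ?_⟩
  apply Set.Subset.antisymm
  · intro m hm
    rw [← hicc]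
    exact ⟨hLsub j hm.1, hm.2⟩
  · intro m hm
    simp only [Set.mem_insert_iff, Set.mem_singleton_iff] at hm
    rcases hm with rfl | rfl
    · exact ⟨hi1 j hj1, Set.left_mem_Icc.mpr (Nat.le_add_right _ _)⟩
    · exact ⟨hi2 j hj2, Set.right_mem_Icc.mpr (Nat.le_add_right _ _)⟩
end

section
/- Let M be a Puiseux monoid with an approximation (M_i)_{i≥1}. Then Δ(M) ⊆ liminf_{i→∞} Δ(M_i), i.e., every d ∈ Δ(M) lies in Δ(M_j) for all sufficiently large j. -/
open scoped NNRat ENNReal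

section Aux

variable {M : AddSubmonoid ℚ≥0} {Mi : ℕ → AddSubmonoid ℚ≥0}

lemma chain_mono (h : PMapprox M Mi) : Monotone Mi :=
  monotone_nat_of_le_succ h.1

lemma atoms_mono_s11 (h : PMapprox M Mi) : Monotone (fun i => PMatoms (Mi i)) :=
  monotone_nat_of_le_succ h.2.2.1

lemma mem_M_of_mem_Mi (h : PMapprox M Mi) {i : ℕ} {x : ℚ≥0} (hx : x ∈ Mi i) : x ∈ M :=
  (h.2.2.2 x).2 ⟨i, hx⟩

lemma atoms_Mi_sub (h : PMapprox M Mi) (i : ℕ) : PMatoms (Mi i) ⊆ PMatoms M := by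
  rintro a ⟨haM, ha0, hsum⟩
  refine ⟨mem_M_of_mem_Mi h haM, ha0, ?_⟩
  intro y hy z hz hy0 hz0
  obtain ⟨j, hj⟩ := (h.2.2.2 y).1 hy
  obtain ⟨k, hk⟩ := (h.2.2.2 z).1 hz
  set m := max i (max j k)
  have ha'' : a ∈ PMatoms (Mi m) := atoms_mono_s11 h (le_max_left _ _) ⟨haM, ha0, hsum⟩
  exact ha''.2.2 y (chain_mono h ((le_max_left j k).trans (le_max_right i _)) hj)
    z (chain_mono h ((le_max_right j k).trans (le_max_right i _)) hk) hy0 hz0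

lemma sum_ne_zero {s : Multiset ℚ≥0} (hs : ∀ a ∈ s, a ≠ 0) (hne : s ≠ 0) : s.sum ≠ 0 := by
  obtain ⟨b, hb⟩ := Multiset.exists_mem_of_ne_zero hne
  obtain ⟨t, rfl⟩ := Multiset.exists_cons_of_mem hb
  rw [Multiset.sum_cons]
  intro hz
  exact hs b (Multiset.mem_cons_self _ _) (by simpa using (add_eq_zero.mp hz).1)

lemma atom_M_mem_Mi (h : PMapprox M Mi) {a : ℚ≥0} (ha : a ∈ PMatoms M) :
    ∃ i, a ∈ PMatoms (Mi i) := by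
  obtain ⟨i, hi⟩ := (h.2.2.2 a).1 ha.1
  refine ⟨i, ?_⟩
  obtain ⟨s, hs, hsum⟩ := AddSubmonoid.exists_multiset_of_mem_closure (h.2.1 i a hi)
  rcases s.empty_or_exists_mem with rfl | ⟨b, hb⟩
  · exact absurd hsum.symm (by simpa using ha.2.1)
  obtain ⟨t, rfl⟩ := Multiset.exists_cons_of_mem hb
  rcases eq_or_ne t 0 with rfl | ht
  · simpa [← hsum] using hs b (Multiset.mem_cons_self _ _)
  · exfalso
    have hb' := hs b (Multiset.mem_cons_self _ _)
    have htM : t.sum ∈ M := mem_M_of_mem_Mi h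
      (AddSubmonoid.multiset_sum_mem _ _ (fun c hc => (hs c (Multiset.mem_cons_of_mem hc)).1))
    have htne : t.sum ≠ 0 := sum_ne_zero
      (fun c hc => (hs c (Multiset.mem_cons_of_mem hc)).2.1) ht
    exact ha.2.2 b (mem_M_of_mem_Mi h hb'.1) t.sum htM hb'.2.1 htne
      (by rw [← hsum, Multiset.sum_cons])

lemma exists_uniform (h : PMapprox M Mi) (s : Multiset ℚ≥0)
    (hs : ∀ a ∈ s, a ∈ PMatoms M) : ∃ i, ∀ a ∈ s, a ∈ PMatoms (Mi i) := by
  induction s using Multiset.induction with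
  | empty => exact ⟨0, by simp⟩
  | cons b t ih =>
    obtain ⟨i, hi⟩ := ih (fun a ha => hs a (Multiset.mem_cons_of_mem ha))
    obtain ⟨j, hj⟩ := atom_M_mem_Mi h (hs b (Multiset.mem_cons_self _ _))
    refine ⟨max i j, ?_⟩
    intro a ha
    rcases Multiset.mem_cons.mp ha with rfl | ha
    · exact atoms_mono_s11 h (le_max_right i j) hj
    · exact atoms_mono_s11 h (le_max_left i j) (hi a ha)

lemma lengths_Mi_sub (h : PMapprox M Mi) (j : ℕ) (x : ℚ≥0) :
    PMlengths (Mi j) x ⊆ PMlengths M x := by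
  rintro n ⟨s, ⟨hs, rfl⟩, rfl⟩
  exact ⟨s, ⟨fun a ha => atoms_Mi_sub h j (hs a ha), rfl⟩, rfl⟩

end Aux

theorem stmt11 (M : AddSubmonoid ℚ≥0) (Mi : ℕ → AddSubmonoid ℚ≥0)
    (h : PMapprox M Mi) :
    PMDelta M ⊆ ⋃ i, ⋂ j ∈ Set.Ici i, PMDelta (Mi j) := by
  intro d hd
  simp only [PMDelta, Set.mem_iUnion, Set.mem_setOf_eq] at hd
  obtain ⟨x, ⟨hxM, hx0⟩, hdpos, l, hl, hIcc⟩ := hd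
  have hld : l + d ∈ PMlengths M x := by
    have : l + d ∈ PMlengths M x ∩ Set.Icc l (l + d) := by
      rw [hIcc]; right; rfl
    exact this.1
  obtain ⟨s, ⟨hsA, hssum⟩, hscard⟩ := hl
  obtain ⟨t, ⟨htA, htsum⟩, htcard⟩ := hld
  obtain ⟨i1, hi1⟩ := exists_uniform h s hsA
  obtain ⟨i2, hi2⟩ := exists_uniform h t htA
  refine Set.mem_iUnion.mpr ⟨max i1 i2, Set.mem_iInter₂.mpr fun j hj => ?_⟩
  have hjs : ∀ a ∈ s, a ∈ PMatoms (Mi j) :=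
    fun a ha => atoms_mono_s11 h ((le_max_left i1 i2).trans hj) (hi1 a ha)
  have hjt : ∀ a ∈ t, a ∈ PMatoms (Mi j) :=
    fun a ha => atoms_mono_s11 h ((le_max_right i1 i2).trans hj) (hi2 a ha)
  have hxMj : x ∈ Mi j := by
    rw [← hssum]
    exact AddSubmonoid.multiset_sum_mem _ _ (fun a ha => (hjs a ha).1)
  have hlj : l ∈ PMlengths (Mi j) x := ⟨s, ⟨hjs, hssum⟩, hscard⟩
  have hldj : l + d ∈ PMlengths (Mi j) x := ⟨t, ⟨hjt, htsum⟩, htcard⟩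
  simp only [PMDelta, Set.mem_iUnion, Set.mem_setOf_eq]
  refine ⟨x, ⟨hxMj, hx0⟩, hdpos, l, hlj, ?_⟩
  apply Set.Subset.antisymm
  · intro m hm
    rw [← hIcc]
    exact ⟨lengths_Mi_sub h j x hm.1, hm.2⟩
  · rintro m (rfl | rfl)
    · exact ⟨hlj, le_refl _, Nat.le_add_right _ _⟩
    · exact ⟨hldj, Nat.le_add_right _ _, le_refl _⟩
end

section
/- Let r be a rational number with 0 < r < 1 such that the cyclic rational monoid S_r = ⟨r^n : n ∈ ℕ₀⟩ is atomic (equivalently, the numerator of r is greater than 1). Then Δ(S_r) ⊆ {d(r) − n(r)}, where n(r), d(r) are the numerator and denominator of r in lowest terms. -/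
open scoped NNRat ENNReal

/-!
For a multiset `E` of exponents let `⟪E⟫ = ∑_{e ∈ E} r ^ e` (`powSum r E`). Since
`d(r) r ^ (j + 1) = n(r) r ^ j`, no power of `r` is an atom when `n(r) = 1`; when `n(r) ≥ 2` the
atoms of `S_r` are exactly the powers of `r`, so the lengths of `x` are the sizes of the multisets
`E` with `⟪E⟫ = x`. Clearing denominators, `d(r) ^ K ⟪E⟫ = ∑_{e ∈ E} n(r) ^ e d(r) ^ (K - e)`;
since `n(r) ≡ d(r)` modulo `d(r) - n(r)`, which is coprime to `n(r)`, all lengths of `x` are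
congruent modulo `d(r) - n(r)`. Trading `d(r)` copies of `r ^ (j + 1)` for `n(r)` copies of
`r ^ j` lowers a length by exactly `d(r) - n(r)`. A multiset admitting no such trade is determined
by `⟪E⟫` (its top multiplicity is read off modulo `d(r)`), so it has the minimal length. Hence
below every non-minimal length of `x` lies the length `d(r) - n(r)` smaller, and no other gap
occurs.
-/

lemma AddSubmonoid.mem_closure_range_iff_exists_multiset {ι M : Type*} [AddCommMonoid M]
    {f : ι → M} {x : M} :
    x ∈ AddSubmonoid.closure (Set.range f) ↔ ∃ E : Multiset ι, (E.map f).sum = x := by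
  constructor
  · intro hx
    induction hx using AddSubmonoid.closure_induction with
    | mem y hy => obtain ⟨i, rfl⟩ := hy; exact ⟨{i}, by simp⟩
    | zero => exact ⟨0, by simp⟩
    | add y z _ _ hy hz =>
      obtain ⟨E, rfl⟩ := hy; obtain ⟨F, rfl⟩ := hz
      exact ⟨E + F, by simp⟩
  · rintro ⟨E, rfl⟩
    exact AddSubmonoid.multiset_sum_mem _ _ fun y hy => by
      obtain ⟨i, -, rfl⟩ := Multiset.mem_map.1 hy
      exact AddSubmonoid.subset_closure ⟨i, rfl⟩

lemma Multiset.exists_map_eq_of_forall_mem_range {ι α : Type*} {f : ι → α} {s : Multiset α}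
    (hs : ∀ a ∈ s, a ∈ Set.range f) : ∃ E : Multiset ι, E.map f = s := by
  induction s using Multiset.induction with
  | empty => exact ⟨0, rfl⟩
  | cons a s ih =>
    obtain ⟨i, rfl⟩ := hs a (Multiset.mem_cons_self a s)
    obtain ⟨E, rfl⟩ := ih fun b hb => hs b (Multiset.mem_cons_of_mem hb)
    exact ⟨i ::ₘ E, Multiset.map_cons f i E⟩

lemma mem_PMlengths_iff_of_PMatoms_eq_range {ι : Type*} {M : AddSubmonoid ℚ≥0} {f : ι → ℚ≥0}
    (hM : PMatoms M = Set.range f) {x : ℚ≥0} {ℓ : ℕ} :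
    ℓ ∈ PMlengths M x ↔ ∃ E : Multiset ι, (E.map f).sum = x ∧ Multiset.card E = ℓ := by
  constructor
  · rintro ⟨s, ⟨hs, rfl⟩, rfl⟩
    obtain ⟨E, rfl⟩ := Multiset.exists_map_eq_of_forall_mem_range fun a ha => hM ▸ hs a ha
    exact ⟨E, rfl, (Multiset.card_map f E).symm⟩
  · rintro ⟨E, rfl, rfl⟩
    refine ⟨E.map f, ⟨fun a ha => ?_, rfl⟩, Multiset.card_map f E⟩
    obtain ⟨i, -, rfl⟩ := Multiset.mem_map.1 ha
    exact hM ▸ Set.mem_range_self i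

lemma PMdistances_subset_singleton {M : AddSubmonoid ℚ≥0} {x : ℚ≥0} {m : ℕ}
    (hmod : ∀ a ∈ PMlengths M x, ∀ b ∈ PMlengths M x, a ≡ b [MOD m])
    (hsub : ∀ a ∈ PMlengths M x, ∀ b ∈ PMlengths M x, a < b → b - m ∈ PMlengths M x) :
    PMdistances M x ⊆ {m} := by
  rintro d ⟨hd, l, hl, hgap⟩
  have hld : l + d ∈ PMlengths M x := by
    have : l + d ∈ PMlengths M x ∩ Set.Icc l (l + d) := by rw [hgap]; exact Or.inr rfl
    exact this.1
  have hmd : m ∣ d := by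
    simpa using (Nat.modEq_iff_dvd' (Nat.le_add_right l d)).1 (hmod l hl _ hld)
  have hm : 0 < m := Nat.pos_of_ne_zero fun h => by simp [h] at hmd; omega
  have hle := Nat.le_of_dvd hd hmd
  have hmem : l + d - m ∈ PMlengths M x ∩ Set.Icc l (l + d) :=
    ⟨hsub l hl _ hld (by omega), by omega, by omega⟩
  rw [hgap] at hmem
  rcases hmem with h | h
  · exact Set.mem_singleton_iff.2 (by omega)
  · exact absurd (Set.mem_singleton_iff.1 h) (by omega)

lemma NNRat.num_le_den_of_le_one {r : ℚ≥0} (hr : r ≤ 1) : r.num ≤ r.den := by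
  have : (r.num : ℚ≥0) ≤ r.den := by
    rw [← NNRat.den_mul_eq_num]; exact mul_le_of_le_one_right zero_le hr
  exact_mod_cast this

lemma NNRat.num_lt_den_of_lt_one {r : ℚ≥0} (hr : r < 1) : r.num < r.den := by
  have : (r.num : ℚ≥0) < r.den := by
    rw [← NNRat.den_mul_eq_num]; exact mul_lt_of_lt_one_right (by simp) hr
  exact_mod_cast this

lemma Multiset.eq_replicate_count_add_filter_ne {α : Type*} [DecidableEq α] (E : Multiset α)
    (k : α) : E = replicate (E.count k) k + E.filter (· ≠ k) := by
  rw [← Multiset.filter_eq', Multiset.filter_add_not]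

namespace CyclicPuiseuxMonoid

open Multiset

variable {r : ℚ≥0} {E F : Multiset ℕ}

def powSum (r : ℚ≥0) (E : Multiset ℕ) : ℚ≥0 := (E.map (r ^ ·)).sum

@[simp] lemma powSum_zero : powSum r 0 = 0 := rfl

@[simp] lemma powSum_cons (e : ℕ) (E : Multiset ℕ) :
    powSum r (e ::ₘ E) = r ^ e + powSum r E := by
  simp [powSum]

@[simp] lemma powSum_add (E F : Multiset ℕ) :
    powSum r (E + F) = powSum r E + powSum r F := by
  simp [powSum]

@[simp] lemma powSum_replicate (n e : ℕ) : powSum r (replicate n e) = n * r ^ e := by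
  simp [powSum]

lemma powSum_map_add (k : ℕ) (E : Multiset ℕ) :
    powSum r (E.map (· + k)) = r ^ k * powSum r E := by
  induction E using Multiset.induction with
  | empty => simp
  | cons e E ih => simp [ih, pow_add]; ring

lemma pow_le_powSum {e : ℕ} (he : e ∈ E) : r ^ e ≤ powSum r E :=
  Multiset.single_le_sum (fun _ _ => zero_le) _ (Multiset.mem_map_of_mem _ he)

lemma powSum_pos (h0 : 0 < r) (hE : E ≠ 0) : 0 < powSum r E := by
  obtain ⟨e, he⟩ := Multiset.exists_mem_of_ne_zero hE
  exact (pow_pos h0 e).trans_le (pow_le_powSum he)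

lemma powSum_replicate_den_succ (j : ℕ) :
    powSum r (replicate r.den (j + 1)) = powSum r (replicate r.num j) := by
  rw [powSum_replicate, powSum_replicate, ← NNRat.den_mul_eq_num, pow_succ]
  ring

def clearedSum (r : ℚ≥0) (K : ℕ) (E : Multiset ℕ) : ℕ :=
  (E.map fun e => r.num ^ e * r.den ^ (K - e)).sum

@[simp] lemma clearedSum_zero (K : ℕ) : clearedSum r K 0 = 0 := rfl

@[simp] lemma clearedSum_cons (K e : ℕ) (E : Multiset ℕ) :
    clearedSum r K (e ::ₘ E) = r.num ^ e * r.den ^ (K - e) + clearedSum r K E := by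
  simp [clearedSum]

lemma cast_clearedSum {K : ℕ} (hE : ∀ e ∈ E, e ≤ K) :
    (clearedSum r K E : ℚ≥0) = r.den ^ K * powSum r E := by
  induction E using Multiset.induction with
  | empty => simp
  | cons e E ih =>
    have hterm : ((r.num ^ e * r.den ^ (K - e) : ℕ) : ℚ≥0) = r.den ^ K * r ^ e := by
      conv_rhs => rw [← Nat.sub_add_cancel (hE e (mem_cons_self e E)), pow_add]
      push_cast
      rw [← NNRat.den_mul_eq_num]
      ring
    rw [clearedSum_cons, powSum_cons, Nat.cast_add, hterm,
      ih fun f hf => hE f (mem_cons_of_mem hf), mul_add]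

lemma clearedSum_eq_of_powSum_eq {K : ℕ} (hE : ∀ e ∈ E, e ≤ K) (hF : ∀ e ∈ F, e ≤ K)
    (h : powSum r E = powSum r F) : clearedSum r K E = clearedSum r K F := by
  have : (clearedSum r K E : ℚ≥0) = clearedSum r K F := by
    rw [cast_clearedSum hE, cast_clearedSum hF, h]
  exact_mod_cast this

/-- Modulo `r.den - r.num` we may replace `r.den` by `r.num`, so every term is `r.num ^ K`. -/
lemma clearedSum_modEq_card (hr : r ≤ 1) {K : ℕ} (hE : ∀ e ∈ E, e ≤ K) :
    clearedSum r K E ≡ card E * r.num ^ K [MOD r.den - r.num] := by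
  induction E using Multiset.induction with
  | empty => simp [Nat.ModEq.refl]
  | cons e E ih =>
    have heK := hE e (mem_cons_self e E)
    have hnum : r.num ≡ r.den [MOD r.den - r.num] :=
      (Nat.modEq_iff_dvd' (NNRat.num_le_den_of_le_one hr)).2 dvd_rfl
    have hterm : r.num ^ e * r.den ^ (K - e) ≡ r.num ^ K [MOD r.den - r.num] := by
      calc r.num ^ e * r.den ^ (K - e) ≡ r.num ^ e * r.num ^ (K - e) [MOD r.den - r.num] :=
            (Nat.ModEq.refl _).mul (hnum.symm.pow _)
        _ = r.num ^ K := by rw [← pow_add, Nat.add_sub_cancel' heK]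
    rw [clearedSum_cons, card_cons, add_mul, one_mul, add_comm _ (r.num ^ K)]
    exact hterm.add (ih fun f hf => hE f (mem_cons_of_mem hf))

lemma card_modEq_of_powSum_eq (hr : r ≤ 1) (h : powSum r E = powSum r F) :
    card E ≡ card F [MOD r.den - r.num] := by
  set K := E.sup ⊔ F.sup
  have hE : ∀ e ∈ E, e ≤ K := fun e he => (le_sup he).trans le_sup_left
  have hF : ∀ e ∈ F, e ≤ K := fun e he => (le_sup he).trans le_sup_right
  have hcop : Nat.Coprime (r.den - r.num) (r.num ^ K) :=
    ((Nat.coprime_sub_self_left (NNRat.num_le_den_of_le_one hr)).2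
      r.coprime_num_den.symm).pow_right K
  refine Nat.ModEq.cancel_right_of_coprime hcop ?_
  calc card E * r.num ^ K ≡ clearedSum r K E [MOD r.den - r.num] :=
        (clearedSum_modEq_card hr hE).symm
    _ = clearedSum r K F := clearedSum_eq_of_powSum_eq hE hF h
    _ ≡ card F * r.num ^ K [MOD r.den - r.num] := clearedSum_modEq_card hr hF

lemma exists_powSum_eq_card_add_of_den_le_count (hr : r ≤ 1) {j : ℕ}
    (hj : r.den ≤ E.count (j + 1)) :
    ∃ F, powSum r F = powSum r E ∧ card F + (r.den - r.num) = card E := by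
  set R := replicate r.den (j + 1)
  have hRE : R ≤ E := le_count_iff_replicate_le.1 hj
  refine ⟨E - R + replicate r.num j, ?_, ?_⟩
  · conv_rhs => rw [← tsub_add_cancel_of_le hRE]
    rw [powSum_add, powSum_add, powSum_replicate_den_succ]
  · have := (count_le_card (j + 1) E).trans' hj
    have := NNRat.num_le_den_of_le_one hr
    rw [card_add, card_sub hRE, card_replicate, card_replicate]
    omega

/-- No `r.den` copies of a positive exponent `j + 1` to trade for `r.num` copies of `j`. -/
def IsReduced (r : ℚ≥0) (E : Multiset ℕ) : Prop := ∀ j, E.count (j + 1) < r.den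

lemma exists_isReduced (hr : r < 1) (E : Multiset ℕ) :
    ∃ F, powSum r F = powSum r E ∧ card F ≤ card E ∧ IsReduced r F := by
  induction hc : card E using Nat.strong_induction_on generalizing E with
  | _ c ih =>
    by_cases hE : IsReduced r E
    · exact ⟨E, rfl, hc.le, hE⟩
    obtain ⟨j, hj⟩ := not_forall.1 hE
    obtain ⟨F, hFE, hcard⟩ := exists_powSum_eq_card_add_of_den_le_count hr.le (not_lt.1 hj)
    have := NNRat.num_lt_den_of_lt_one hr
    obtain ⟨G, hGF, hcardG, hG⟩ := ih (card F) (by omega) F rfl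
    exact ⟨G, hGF.trans hFE, by omega, hG⟩

lemma clearedSum_modEq_count {K : ℕ} (hE : ∀ e ∈ E, e ≤ K + 1) :
    clearedSum r (K + 1) E ≡ E.count (K + 1) * r.num ^ (K + 1) [MOD r.den] := by
  induction E using Multiset.induction with
  | empty => simp [Nat.ModEq.refl]
  | cons e E ih =>
    have ih := ih fun f hf => hE f (mem_cons_of_mem hf)
    rw [clearedSum_cons, count_cons]
    by_cases he : K + 1 = e
    · subst he
      simpa [add_mul, add_comm] using ih.add_left (r.num ^ (K + 1))
    · have hdvd : r.den ∣ r.num ^ e * r.den ^ (K + 1 - e) :=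
        dvd_mul_of_dvd_right (dvd_pow_self _ (by have := hE e (mem_cons_self e E); omega)) _
      simpa [he] using ((Nat.modEq_zero_iff_dvd.2 hdvd).add ih)

lemma IsReduced.filter (hE : IsReduced r E) (p : ℕ → Prop) [DecidablePred p] :
    IsReduced r (E.filter p) :=
  fun j => (count_le_of_le _ (filter_le p E)).trans_lt (hE j)

lemma IsReduced.count_eq_of_powSum_eq {K : ℕ} (hE : IsReduced r E) (hF : IsReduced r F)
    (hEK : ∀ e ∈ E, e ≤ K + 1) (hFK : ∀ e ∈ F, e ≤ K + 1) (h : powSum r E = powSum r F) :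
    E.count (K + 1) = F.count (K + 1) := by
  have hmod : E.count (K + 1) * r.num ^ (K + 1) ≡ F.count (K + 1) * r.num ^ (K + 1) [MOD r.den] :=
    (clearedSum_modEq_count hEK).symm.trans
      ((clearedSum_eq_of_powSum_eq hEK hFK h) ▸ clearedSum_modEq_count hFK)
  exact Nat.ModEq.eq_of_lt_of_lt
    (hmod.cancel_right_of_coprime (r.coprime_num_den.symm.pow_right _)) (hE K) (hF K)

lemma IsReduced.eq_of_powSum_eq_of_forall_le {K : ℕ} (hE : IsReduced r E) (hF : IsReduced r F)
    (hEK : ∀ e ∈ E, e ≤ K) (hFK : ∀ e ∈ F, e ≤ K) (h : powSum r E = powSum r F) : E = F := by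
  induction K generalizing E F with
  | zero =>
    rw [eq_replicate_card.2 fun e he => Nat.le_zero.1 (hEK e he),
      eq_replicate_card.2 fun e he => Nat.le_zero.1 (hFK e he)] at h ⊢
    simp only [powSum_replicate, pow_zero, mul_one, Nat.cast_inj] at h
    rw [h]
  | succ K ih =>
    have hlow : ∀ G : Multiset ℕ, (∀ e ∈ G, e ≤ K + 1) → ∀ e ∈ G.filter (· ≠ K + 1), e ≤ K :=
      fun G hG e he => by
        have := hG e (mem_of_mem_filter he)
        have := (mem_filter.1 he).2
        omega
    have hcount := hE.count_eq_of_powSum_eq hF hEK hFK h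
    rw [Multiset.eq_replicate_count_add_filter_ne E (K + 1),
      Multiset.eq_replicate_count_add_filter_ne F (K + 1), hcount, powSum_add, powSum_add] at h
    rw [Multiset.eq_replicate_count_add_filter_ne E (K + 1),
      Multiset.eq_replicate_count_add_filter_ne F (K + 1), hcount,
      ih (hE.filter _) (hF.filter _) (hlow E hEK) (hlow F hFK) (add_left_cancel h)]

lemma IsReduced.eq_of_powSum_eq (hE : IsReduced r E) (hF : IsReduced r F)
    (h : powSum r E = powSum r F) : E = F :=
  hE.eq_of_powSum_eq_of_forall_le hF (fun _ he => (le_sup he).trans le_sup_left)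
    (fun _ he => (le_sup he).trans le_sup_right) h

lemma IsReduced.card_le (hr : r < 1) (hE : IsReduced r E) (h : powSum r E = powSum r F) :
    card E ≤ card F := by
  obtain ⟨G, hGF, hcard, hG⟩ := exists_isReduced hr F
  rw [hE.eq_of_powSum_eq hG (h.trans hGF.symm)]
  exact hcard

lemma exists_powSum_eq_card_eq_sub (hr : r < 1) (h : powSum r E = powSum r F)
    (hlt : card F < card E) :
    ∃ G, powSum r G = powSum r E ∧ card G = card E - (r.den - r.num) := by
  by_cases hE : IsReduced r E
  · exact absurd (hE.card_le hr h) hlt.not_ge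
  obtain ⟨j, hj⟩ := not_forall.1 hE
  obtain ⟨G, hG, hcard⟩ := exists_powSum_eq_card_add_of_den_le_count hr.le (not_lt.1 hj)
  exact ⟨G, hG, by omega⟩

def cyclicMonoid (r : ℚ≥0) : AddSubmonoid ℚ≥0 := AddSubmonoid.closure (Set.range (r ^ ·))

lemma mem_cyclicMonoid_iff {x : ℚ≥0} : x ∈ cyclicMonoid r ↔ ∃ E, powSum r E = x :=
  AddSubmonoid.mem_closure_range_iff_exists_multiset

lemma powSum_mem_cyclicMonoid (E : Multiset ℕ) : powSum r E ∈ cyclicMonoid r :=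
  mem_cyclicMonoid_iff.2 ⟨E, rfl⟩

lemma pow_mem_cyclicMonoid (k : ℕ) : r ^ k ∈ cyclicMonoid r :=
  AddSubmonoid.subset_closure ⟨k, rfl⟩

lemma card_eq_one_of_powSum_mem_PMatoms (h0 : 0 < r)
    (hE : powSum r E ∈ PMatoms (cyclicMonoid r)) : card E = 1 := by
  obtain ⟨-, hE0, hsplit⟩ := hE
  obtain ⟨e, F, rfl⟩ : ∃ e F, E = e ::ₘ F := by
    obtain ⟨e, he⟩ := exists_mem_of_ne_zero (show E ≠ 0 by rintro rfl; exact hE0 rfl)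
    exact ⟨e, exists_cons_of_mem he⟩
  obtain rfl | hF := eq_or_ne F 0
  · rfl
  · exact absurd (powSum_cons e F) (hsplit _ (pow_mem_cyclicMonoid e) _
      (powSum_mem_cyclicMonoid F) (pow_pos h0 e).ne' (powSum_pos h0 hF).ne')

lemma powSum_ne_one (hnum : r.num ≠ 1) (hE : ∀ e ∈ E, 1 ≤ e) : powSum r E ≠ 1 := by
  intro h1
  set K := E.sup
  have hK : ∀ e ∈ E, e ≤ K := fun e he => le_sup he
  have hcleared : clearedSum r K E = r.den ^ K := by
    have := cast_clearedSum (r := r) hK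
    rw [h1, mul_one] at this
    exact_mod_cast this
  have hdvd : r.num ∣ clearedSum r K E :=
    dvd_sum fun t ht => by
      obtain ⟨e, he, rfl⟩ := mem_map.1 ht
      exact dvd_mul_of_dvd_left (dvd_pow_self _ (by have := hE e he; omega)) _
  rw [hcleared] at hdvd
  exact hnum ((r.coprime_num_den.pow_right K).eq_one_of_dvd hdvd)

lemma pow_mem_PMatoms (h0 : 0 < r) (h1 : r < 1) (hnum : r.num ≠ 1) (k : ℕ) :
    r ^ k ∈ PMatoms (cyclicMonoid r) := by
  refine ⟨pow_mem_cyclicMonoid k, (pow_pos h0 k).ne', ?_⟩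
  rintro y hy z hz hy0 hz0 hyz
  obtain ⟨Ey, rfl⟩ := mem_cyclicMonoid_iff.1 hy
  obtain ⟨Ez, rfl⟩ := mem_cyclicMonoid_iff.1 hz
  have hgt : ∀ e ∈ Ey + Ez, k < e := by
    intro e he
    refine (pow_lt_pow_iff_right_of_lt_one₀ h0 h1).1 ?_
    rw [hyz]
    rcases mem_add.1 he with he | he
    · exact (pow_le_powSum he).trans_lt (lt_add_of_pos_right _ (pos_iff_ne_zero.2 hz0))
    · exact (pow_le_powSum he).trans_lt (lt_add_of_pos_left _ (pos_iff_ne_zero.2 hy0))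
  have hshift : ((Ey + Ez).map (· - k)).map (· + k) = Ey + Ez := by
    rw [map_map]
    conv_rhs => rw [← map_id (Ey + Ez)]
    exact map_congr rfl fun e he => by have := hgt e he; simp only [Function.comp_apply, id]; omega
  refine powSum_ne_one hnum (E := (Ey + Ez).map (· - k)) ?_ ?_
  · intro e he
    obtain ⟨f, hf, rfl⟩ := mem_map.1 he
    have := hgt f hf
    omega
  · have := powSum_map_add (r := r) k ((Ey + Ez).map (· - k))
    rw [hshift, powSum_add, ← hyz] at this
    exact (mul_eq_left₀ (pow_pos h0 k).ne').1 this.symm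

lemma PMatoms_cyclicMonoid (h0 : 0 < r) (h1 : r < 1) (hnum : r.num ≠ 1) :
    PMatoms (cyclicMonoid r) = Set.range (r ^ ·) := by
  ext a
  refine ⟨fun ha => ?_, ?_⟩
  · obtain ⟨E, rfl⟩ := mem_cyclicMonoid_iff.1 ha.1
    obtain ⟨e, rfl⟩ := card_eq_one.1 (card_eq_one_of_powSum_mem_PMatoms h0 ha)
    exact ⟨e, by simp [powSum]⟩
  · rintro ⟨k, rfl⟩
    exact pow_mem_PMatoms h0 h1 hnum k

lemma num_ne_one_of_PMatomic (h0 : 0 < r) (h1 : r < 1) (hat : PMatomic (cyclicMonoid r)) :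
    r.num ≠ 1 := by
  intro hnum
  obtain ⟨a, ha⟩ : (PMatoms (cyclicMonoid r)).Nonempty := by
    rw [Set.nonempty_iff_ne_empty]
    intro h
    have := hat 1 (by simpa using pow_mem_cyclicMonoid (r := r) 0)
    rw [h, AddSubmonoid.closure_empty, AddSubmonoid.mem_bot] at this
    exact one_ne_zero this
  obtain ⟨E, rfl⟩ := mem_cyclicMonoid_iff.1 ha.1
  obtain ⟨e, rfl⟩ := card_eq_one.1 (card_eq_one_of_powSum_mem_PMatoms h0 ha)
  have htrade : powSum r (replicate r.den (e + 1)) = powSum r {e} := by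
    rw [powSum_replicate_den_succ, hnum]
    simp [powSum]
  have := card_eq_one_of_powSum_mem_PMatoms h0 (htrade ▸ ha)
  rw [card_replicate] at this
  have := NNRat.num_lt_den_of_lt_one h1
  omega

lemma PMlengths_modEq (h0 : 0 < r) (h1 : r < 1) (hnum : r.num ≠ 1) {x : ℚ≥0} {a b : ℕ}
    (ha : a ∈ PMlengths (cyclicMonoid r) x) (hb : b ∈ PMlengths (cyclicMonoid r) x) :
    a ≡ b [MOD r.den - r.num] := by
  rw [mem_PMlengths_iff_of_PMatoms_eq_range (PMatoms_cyclicMonoid h0 h1 hnum)] at ha hb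
  obtain ⟨E, hE, rfl⟩ := ha
  obtain ⟨F, hF, rfl⟩ := hb
  exact card_modEq_of_powSum_eq h1.le (hE.trans hF.symm)

lemma sub_mem_PMlengths (h0 : 0 < r) (h1 : r < 1) (hnum : r.num ≠ 1) {x : ℚ≥0} {a b : ℕ}
    (ha : a ∈ PMlengths (cyclicMonoid r) x) (hb : b ∈ PMlengths (cyclicMonoid r) x)
    (hab : a < b) : b - (r.den - r.num) ∈ PMlengths (cyclicMonoid r) x := by
  rw [mem_PMlengths_iff_of_PMatoms_eq_range (PMatoms_cyclicMonoid h0 h1 hnum)] at ha hb ⊢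
  obtain ⟨E, hE, rfl⟩ := ha
  obtain ⟨F, hF, rfl⟩ := hb
  obtain ⟨G, hG, hcard⟩ := exists_powSum_eq_card_eq_sub h1 (hF.trans hE.symm) hab
  exact ⟨G, hG.trans hF, hcard⟩

end CyclicPuiseuxMonoid

theorem stmt13 (r : ℚ≥0) (h0 : 0 < r) (h1 : r < 1)
    (S : AddSubmonoid ℚ≥0)
    (hS : S = AddSubmonoid.closure {q : ℚ≥0 | ∃ n : ℕ, q = r ^ n})
    (hatomic : PMatomic S) :
    PMDelta S ⊆ {r.den - r.num} := by
  obtain rfl : S = CyclicPuiseuxMonoid.cyclicMonoid r := by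
    rw [hS, CyclicPuiseuxMonoid.cyclicMonoid]
    congr 1
    ext q
    simp [eq_comm]
  have hnum := CyclicPuiseuxMonoid.num_ne_one_of_PMatomic h0 h1 hatomic
  intro d hd
  obtain ⟨x, -, hd⟩ := Set.mem_iUnion₂.1 hd
  exact PMdistances_subset_singleton
    (fun _ ha _ hb => CyclicPuiseuxMonoid.PMlengths_modEq h0 h1 hnum ha hb)
    (fun _ ha _ hb => CyclicPuiseuxMonoid.sub_mem_PMlengths h0 h1 hnum ha hb) hd
end

section
/- Let r ∈ ℚ with r > 1 and r ∉ ℕ, and let S_r = ⟨r^n : n ∈ ℕ₀⟩ (which is atomic). Then Δ(S_r) ⊆ {n(r) − d(r)}. -/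
open scoped NNRat ENNReal

/-!
Write `r = p / q` in lowest terms, so `q ≥ 2`. The atoms of `S_r` are exactly the powers `r ^ n`
(a sum of smaller powers has denominator dividing a smaller power of `q`), so factorizations are
multisets of exponents. Trading `p` copies of `r ^ n` for `q` copies of `r ^ (n + 1)` preserves the
element and shortens the factorization by `p - q`. Repeating this ends in a factorization in which
every exponent occurs fewer than `p` times, and that factorization is unique: after clearing
denominators, reduction modulo `p` determines the multiplicities from the lowest exponent up.
Hence all lengths of `x` are congruent modulo `p - q`, the reduced factorization is the shortest,
and every longer factorization has one exactly `p - q` shorter; so two consecutive lengths differ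
by `p - q`.
-/

namespace PowerMonoid

open Multiset

def powSum (r : ℚ≥0) (e : Multiset ℕ) : ℚ≥0 := (e.map (r ^ ·)).sum

variable {r : ℚ≥0} {p q : ℕ}

@[simp] lemma powSum_zero : powSum r 0 = 0 := rfl

@[simp] lemma powSum_cons (n : ℕ) (e : Multiset ℕ) :
    powSum r (n ::ₘ e) = r ^ n + powSum r e := by
  simp [powSum]

@[simp] lemma powSum_singleton (n : ℕ) : powSum r {n} = r ^ n := by
  simp [powSum]

@[simp] lemma powSum_add (e e' : Multiset ℕ) : powSum r (e + e') = powSum r e + powSum r e' := by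
  simp [powSum]

@[simp] lemma powSum_replicate (k n : ℕ) : powSum r (replicate k n) = k * r ^ n := by
  simp [powSum, nsmul_eq_mul]

lemma powSum_eq_zero_iff (hr : r ≠ 0) {e : Multiset ℕ} : powSum r e = 0 ↔ e = 0 := by
  simp [powSum, Multiset.sum_eq_zero_iff, pow_ne_zero _ hr, Multiset.eq_zero_iff_forall_notMem]

lemma pow_le_powSum {e : Multiset ℕ} {m : ℕ} (hm : m ∈ e) : r ^ m ≤ powSum r e :=
  Multiset.le_sum_of_mem (mem_map_of_mem _ hm)

lemma powSum_replicate_succ (hqr : (q : ℚ≥0) * r = p) (n : ℕ) :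
    powSum r (replicate q (n + 1)) = powSum r (replicate p n) := by
  rw [powSum_replicate, powSum_replicate, ← hqr, pow_succ]
  ring

def IsReduced (p : ℕ) (e : Multiset ℕ) : Prop := ∀ n, e.count n < p

lemma exists_powSum_eq_of_not_isReduced (hqr : (q : ℚ≥0) * r = p) (hqp : q ≤ p)
    {e : Multiset ℕ} (he : ¬ IsReduced p e) :
    ∃ e', powSum r e' = powSum r e ∧ card e' + (p - q) = card e := by
  obtain ⟨n, hn⟩ : ∃ n, p ≤ e.count n := by simpa [IsReduced] using he
  obtain ⟨t, rfl⟩ := Multiset.le_iff_exists_add.mp (le_count_iff_replicate_le.mp hn)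
  refine ⟨replicate q (n + 1) + t, ?_, ?_⟩
  · rw [powSum_add, powSum_add, powSum_replicate_succ hqr]
  · simp only [card_add, card_replicate]
    omega

lemma exists_isReduced (hqr : (q : ℚ≥0) * r = p) (hqp : q < p) (e : Multiset ℕ) :
    ∃ e₀, IsReduced p e₀ ∧ powSum r e₀ = powSum r e ∧
      ∃ k, card e = card e₀ + k * (p - q) := by
  induction h : card e using Nat.strong_induction_on generalizing e with
  | _ c ih =>
  by_cases he : IsReduced p e
  · exact ⟨e, he, rfl, 0, by simp [h]⟩
  obtain ⟨e', hsum, hcard⟩ := exists_powSum_eq_of_not_isReduced hqr hqp.le he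
  obtain ⟨e₀, hred, hsum₀, k, hk⟩ := ih (card e') (by omega) e' rfl
  refine ⟨e₀, hred, hsum₀.trans hsum, k + 1, ?_⟩
  rw [← h, ← hcard, hk, add_mul, one_mul, add_assoc]

def scaledPowSum (p q n N : ℕ) (e : Multiset ℕ) : ℕ :=
  (e.map fun m => p ^ (m - n) * q ^ (N - m)).sum

lemma scaledPowSum_mul_pow (hqr : (q : ℚ≥0) * r = p) {n N : ℕ} {e : Multiset ℕ}
    (he : ∀ m ∈ e, n ≤ m ∧ m ≤ N) :
    (scaledPowSum p q n N e : ℚ≥0) * r ^ n = q ^ (N - n) * powSum r e := by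
  simp only [scaledPowSum, powSum, Nat.cast_multiset_sum, Multiset.map_map, Function.comp_def,
    Nat.cast_mul, Nat.cast_pow, ← Multiset.sum_map_mul_right, ← Multiset.sum_map_mul_left]
  refine congrArg _ (Multiset.map_congr rfl fun m hm => ?_)
  obtain ⟨hnm, hmN⟩ := he m hm
  obtain ⟨a, rfl⟩ := Nat.exists_eq_add_of_le hnm
  obtain ⟨b, rfl⟩ := Nat.exists_eq_add_of_le hmN
  rw [← hqr, show n + a + b - (n + a) = b by omega, show n + a + b - n = a + b by omega,
    Nat.add_sub_cancel_left]
  ring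

lemma scaledPowSum_modEq {n N : ℕ} {e : Multiset ℕ} (he : ∀ m ∈ e, n ≤ m) :
    scaledPowSum p q n N e ≡ e.count n * q ^ (N - n) [MOD p] := by
  induction e using Multiset.induction_on with
  | empty => simp [scaledPowSum, Nat.ModEq]
  | cons m e ih =>
    have ih := ih fun k hk => he k (mem_cons_of_mem hk)
    have hsplit : scaledPowSum p q n N (m ::ₘ e) =
        p ^ (m - n) * q ^ (N - m) + scaledPowSum p q n N e := by
      simp [scaledPowSum]
    rw [hsplit]
    rcases (he m (mem_cons_self m e)).eq_or_lt with rfl | hlt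
    · rw [count_cons_self, Nat.sub_self, pow_zero, one_mul, add_mul, one_mul, add_comm]
      exact ih.add_right _
    · have hdvd : p ^ (m - n) * q ^ (N - m) ≡ 0 [MOD p] :=
        Nat.modEq_zero_iff_dvd.mpr (Dvd.dvd.mul_right (dvd_pow_self p (by omega)) _)
      rw [count_cons_of_ne hlt.ne]
      simpa using hdvd.add ih

lemma count_modEq_of_powSum_eq (hcop : p.Coprime q) (hqr : (q : ℚ≥0) * r = p) (hr : r ≠ 0)
    {n : ℕ} {a b : Multiset ℕ} (ha : ∀ m ∈ a, n ≤ m) (hb : ∀ m ∈ b, n ≤ m)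
    (h : powSum r a = powSum r b) : a.count n ≡ b.count n [MOD p] := by
  set N := (a + b).sum
  have hbound : ∀ m ∈ a + b, m ≤ N := fun m hm => Multiset.le_sum_of_mem hm
  have hscaled : scaledPowSum p q n N a = scaledPowSum p q n N b := by
    have ha' := scaledPowSum_mul_pow (N := N) hqr fun m hm =>
      ⟨ha m hm, hbound m (mem_add.mpr (.inl hm))⟩
    have hb' := scaledPowSum_mul_pow (N := N) hqr fun m hm =>
      ⟨hb m hm, hbound m (mem_add.mpr (.inr hm))⟩
    rw [h, ← hb'] at ha'
    exact_mod_cast mul_right_cancel₀ (pow_ne_zero n hr) ha'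
  refine Nat.ModEq.cancel_right_of_coprime (c := q ^ (N - n)) ?_ ?_
  · exact (Nat.Coprime.pow_right _ hcop)
  · exact (scaledPowSum_modEq ha).symm.trans (hscaled ▸ scaledPowSum_modEq hb)

lemma IsReduced.eq_of_powSum_eq (hcop : p.Coprime q) (hqr : (q : ℚ≥0) * r = p) (hr : r ≠ 0)
    {a b : Multiset ℕ} (ha : IsReduced p a) (hb : IsReduced p b)
    (h : powSum r a = powSum r b) : a = b := by
  ext n
  induction n using Nat.strong_induction_on with
  | _ n ih =>
  have hlow : a.filter (· < n) = b.filter (· < n) := by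
    ext m
    simp only [count_filter]
    split_ifs with hm
    exacts [ih m hm, rfl]
  have hhigh : powSum r (a.filter fun m => ¬ m < n) = powSum r (b.filter fun m => ¬ m < n) := by
    apply add_left_cancel (a := powSum r (a.filter (· < n)))
    rw [← powSum_add, filter_add_not, hlow, ← powSum_add, filter_add_not, h]
  have hge (s : Multiset ℕ) : ∀ m ∈ s.filter (fun m => ¬ m < n), n ≤ m :=
    fun m hm => not_lt.mp (of_mem_filter (p := fun m => ¬ m < n) hm)
  have := count_modEq_of_powSum_eq hcop hqr hr (hge a) (hge b) hhigh
  simp only [count_filter, lt_irrefl, not_false_eq_true, if_true] at this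
  exact this.eq_of_lt_of_lt (ha n) (hb n)

lemma card_modEq_of_powSum_eq (hcop : p.Coprime q) (hqr : (q : ℚ≥0) * r = p) (hr : r ≠ 0)
    (hqp : q < p) {e e' : Multiset ℕ} (h : powSum r e = powSum r e') :
    card e ≡ card e' [MOD p - q] := by
  obtain ⟨e₀, hred, hsum, k, hk⟩ := exists_isReduced hqr hqp e
  obtain ⟨e₀', hred', hsum', k', hk'⟩ := exists_isReduced hqr hqp e'
  obtain rfl := hred.eq_of_powSum_eq hcop hqr hr hred' (by rw [hsum, hsum', h])
  rw [hk, hk']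
  exact (Nat.add_mul_mod_self_right _ _ _).trans (Nat.add_mul_mod_self_right _ _ _).symm

lemma IsReduced.card_le_of_powSum_eq (hcop : p.Coprime q) (hqr : (q : ℚ≥0) * r = p)
    (hr : r ≠ 0) (hqp : q < p) {e₀ e : Multiset ℕ} (he₀ : IsReduced p e₀)
    (h : powSum r e₀ = powSum r e) : card e₀ ≤ card e := by
  obtain ⟨e₁, hred, hsum, k, hk⟩ := exists_isReduced hqr hqp e
  obtain rfl := he₀.eq_of_powSum_eq hcop hqr hr hred (h.trans hsum.symm)
  omega

lemma exists_map_pow_eq {s : Multiset ℚ≥0} (hs : ∀ a ∈ s, ∃ n : ℕ, a = r ^ n) :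
    ∃ e : Multiset ℕ, e.map (r ^ ·) = s := by
  induction s using Multiset.induction_on with
  | empty => exact ⟨0, rfl⟩
  | cons a s ih =>
    obtain ⟨n, rfl⟩ := hs a (mem_cons_self a s)
    obtain ⟨e, he⟩ := ih fun b hb => hs b (mem_cons_of_mem hb)
    exact ⟨n ::ₘ e, by rw [map_cons, he]⟩

lemma mem_closure_pow_iff {x : ℚ≥0} :
    x ∈ AddSubmonoid.closure {a : ℚ≥0 | ∃ n : ℕ, a = r ^ n} ↔
      ∃ e, powSum r e = x := by
  constructor
  · intro hx
    obtain ⟨s, hs, rfl⟩ := AddSubmonoid.exists_multiset_of_mem_closure hx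
    obtain ⟨e, rfl⟩ := exists_map_pow_eq hs
    exact ⟨e, rfl⟩
  · rintro ⟨e, rfl⟩
    refine AddSubmonoid.multiset_sum_mem _ _ fun a ha => AddSubmonoid.subset_closure ?_
    obtain ⟨n, -, rfl⟩ := mem_map.mp ha
    exact ⟨n, rfl⟩

lemma exists_natCast_eq_pow_mul_powSum (hqr : (q : ℚ≥0) * r = p) {N : ℕ} {e : Multiset ℕ}
    (he : ∀ m ∈ e, m ≤ N) : ∃ k : ℕ, (k : ℚ≥0) = q ^ N * powSum r e :=
  ⟨scaledPowSum p q 0 N e, by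
    simpa using scaledPowSum_mul_pow hqr fun m hm => ⟨Nat.zero_le m, he m hm⟩⟩

lemma pow_ne_powSum (hcop : p.Coprime q) (hq : q ≠ 1) (hqr : (q : ℚ≥0) * r = p) {n : ℕ}
    {e : Multiset ℕ} (he : ∀ m ∈ e, m < n) : r ^ n ≠ powSum r e := by
  intro h
  cases n with
  | zero =>
    rw [eq_zero_of_forall_notMem fun m hm => Nat.not_lt_zero m (he m hm)] at h
    simp at h
  | succ N =>
    obtain ⟨k, hk⟩ :=
      exists_natCast_eq_pow_mul_powSum hqr fun m hm => Nat.le_of_lt_succ (he m hm)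
    have hdvd : q ∣ p ^ (N + 1) := ⟨k, by
      have : ((q : ℚ≥0) * r) ^ (N + 1) = q * (q ^ N * r ^ (N + 1)) := by ring
      rw [hqr, h, ← hk] at this
      exact_mod_cast this⟩
    exact hq (Nat.Coprime.eq_one_of_dvd (hcop.symm.pow_right _) hdvd)

lemma atoms_closure_pow (h1 : 1 < r) (hcop : p.Coprime q) (hq : q ≠ 1)
    (hqr : (q : ℚ≥0) * r = p) :
    PMatoms (AddSubmonoid.closure {a : ℚ≥0 | ∃ n : ℕ, a = r ^ n}) =
      {a | ∃ n : ℕ, a = r ^ n} := by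
  have hr : r ≠ 0 := (zero_lt_one.trans h1).ne'
  ext a
  constructor
  · rintro ⟨ha, ha0, hirr⟩
    obtain ⟨e, rfl⟩ := mem_closure_pow_iff.mp ha
    obtain ⟨n, hn⟩ := exists_mem_of_ne_zero fun (he : e = 0) => ha0 (by rw [he, powSum_zero])
    obtain ⟨t, rfl⟩ := exists_cons_of_mem hn
    rcases eq_or_ne t 0 with rfl | ht
    · exact ⟨n, by simp⟩
    · refine absurd (powSum_cons n t) <| hirr _ (mem_closure_pow_iff.mpr ⟨{n}, by simp⟩) _
        (mem_closure_pow_iff.mpr ⟨t, rfl⟩) (pow_ne_zero n hr) ?_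
      exact (powSum_eq_zero_iff hr).not.mpr ht
  · rintro ⟨n, rfl⟩
    refine ⟨AddSubmonoid.subset_closure ⟨n, rfl⟩, pow_ne_zero n hr, ?_⟩
    rintro y hy z hz hy0 hz0 hsum
    obtain ⟨ey, rfl⟩ := mem_closure_pow_iff.mp hy
    obtain ⟨ez, rfl⟩ := mem_closure_pow_iff.mp hz
    have hlt : ∀ m ∈ ey + ez, r ^ m < r ^ n := by
      intro m hm
      rcases mem_add.mp hm with hm | hm
      · exact (pow_le_powSum hm).trans_lt (hsum ▸ lt_add_of_pos_right _ (pos_of_ne_zero hz0))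
      · exact (pow_le_powSum hm).trans_lt (hsum ▸ lt_add_of_pos_left _ (pos_of_ne_zero hy0))
    exact pow_ne_powSum hcop hq hqr (fun m hm => (pow_lt_pow_iff_right₀ h1).mp (hlt m hm))
      (by rw [powSum_add, hsum])

lemma lengths_closure_pow (h1 : 1 < r) (hcop : p.Coprime q) (hq : q ≠ 1)
    (hqr : (q : ℚ≥0) * r = p) (x : ℚ≥0) :
    PMlengths (AddSubmonoid.closure {a : ℚ≥0 | ∃ n : ℕ, a = r ^ n}) x =
      {l | ∃ e, powSum r e = x ∧ card e = l} := by
  ext l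
  simp only [PMlengths, PMfactorizations, atoms_closure_pow h1 hcop hq hqr, Set.mem_image,
    Set.mem_ofPred_eq]
  constructor
  · rintro ⟨s, ⟨hs, rfl⟩, rfl⟩
    obtain ⟨e, rfl⟩ := exists_map_pow_eq hs
    exact ⟨e, rfl, (card_map _ _).symm⟩
  · rintro ⟨e, rfl, rfl⟩
    exact ⟨e.map (r ^ ·), ⟨by simp, rfl⟩, card_map _ _⟩

lemma distances_closure_pow_subset (h1 : 1 < r) (hn : ∀ n : ℕ, r ≠ n) (x : ℚ≥0) :
    PMdistances (AddSubmonoid.closure {a : ℚ≥0 | ∃ n : ℕ, a = r ^ n}) x ⊆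
      {r.num - r.den} := by
  have hqr : (r.den : ℚ≥0) * r = r.num := NNRat.den_mul_eq_num r
  have hr : r ≠ 0 := (zero_lt_one.trans h1).ne'
  have hq : r.den ≠ 1 := fun h => hn r.num (by rw [← hqr, h, Nat.cast_one, one_mul])
  have hqp : r.den < r.num := by simpa using NNRat.lt_def.mp h1
  have hcop : r.num.Coprime r.den := r.coprime_num_den
  rintro d ⟨hd0, l, hl, hgap⟩
  rw [lengths_closure_pow h1 hcop hq hqr] at hl hgap
  have hlength : l + d ∈ {l | ∃ e, powSum r e = x ∧ card e = l} :=
    (hgap.symm.subset (Set.mem_insert_of_mem _ rfl)).1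
  obtain ⟨e, he, rfl⟩ := hl
  obtain ⟨e', he', hcard'⟩ := hlength
  have hdvd : r.num - r.den ∣ d := by
    have := card_modEq_of_powSum_eq hcop hqr hr hqp (he.trans he'.symm)
    rw [hcard'] at this
    simpa using (Nat.modEq_iff_dvd' (Nat.le_add_right _ d)).mp this
  have hred : ¬ IsReduced r.num e' := fun hred => by
    have := hred.card_le_of_powSum_eq hcop hqr hr hqp (he'.trans he.symm)
    omega
  obtain ⟨e'', he'', hcard''⟩ := exists_powSum_eq_of_not_isReduced hqr hqp.le hred
  have hle : r.num - r.den ≤ d := Nat.le_of_dvd hd0 hdvd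
  have hmem : card e'' ∈ ({card e, card e + d} : Set ℕ) :=
    hgap ▸ ⟨⟨e'', he''.trans he', rfl⟩, by omega, by omega⟩
  rw [Set.mem_insert_iff, Set.mem_singleton_iff] at hmem
  rw [Set.mem_singleton_iff]
  omega

end PowerMonoid

theorem stmt14 (r : ℚ≥0) (h1 : 1 < r) (hn : ∀ n : ℕ, r ≠ (n : ℚ≥0))
    (S : AddSubmonoid ℚ≥0)
    (hS : S = AddSubmonoid.closure {q : ℚ≥0 | ∃ n : ℕ, q = r ^ n}) :
    PMDelta S ⊆ {r.num - r.den} := by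
  subst hS
  intro d hd
  simp only [PMDelta, Set.mem_iUnion] at hd
  obtain ⟨x, -, hdx⟩ := hd
  exact PowerMonoid.distances_closure_pow_subset h1 hn x hdx
end

section
/- Let B be a nonempty subset of ℚ_{>0} \ ℕ such that for all distinct b, b' ∈ B: n(b) > 1, gcd(d(b), d(b')) = 1, and |n(b) − d(b)| = |n(b') − d(b')|. Fix b₁ ∈ B. Then the set of distances of the Puiseux monoid M_B := ⟨b^n : b ∈ B, n ∈ ℕ₀⟩ satisfies Δ(M_B) ⊆ {|n(b₁) − d(b₁)|}. -/
open scoped NNRat ENNReal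

/-!
Rewriting `d(b)` copies of `b ^ (m + 1)` as `n(b)` copies of `b ^ m` preserves the sum of a
multiset of powers and changes its size by `± δ`, where `δ = |n(b) - d(b)|` does not depend on `b`.
Every multiset of powers can be rewritten into a reduced one, holding fewer than `d(b)` copies of
each `b ^ (m + 1)`, and a reduced multiset is determined by its sum: at the highest power of `b`
where two of them differ, clearing denominators shows (the other denominators being coprime to
`d(b)`) that the two counts agree modulo `d(b)`. So any two factorizations of `x` are joined by a
walk whose lengths move by `± δ`; all lengths of `x` are then congruent modulo `δ`, and a walk
from a length `l` up to a larger one passes through `l + δ`.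
-/

open Multiset Relation

theorem NNRat.pos_of_two_le_den {b : ℚ≥0} (hb : 2 ≤ b.den) : 0 < b := by
  refine pos_iff_ne_zero.2 ?_
  rintro rfl
  simp at hb

theorem NNRat.pow_injective_of_two_le_den {b : ℚ≥0} (hb : 2 ≤ b.den) :
    Function.Injective (b ^ · : ℕ → ℚ≥0) :=
  fun m j h => Nat.pow_right_injective hb (by simpa using congrArg NNRat.den h)

theorem NNRat.den_nsmul_pow_succ (b : ℚ≥0) (m : ℕ) : b.den • b ^ (m + 1) = b.num • b ^ m := by
  rw [nsmul_eq_mul, nsmul_eq_mul, pow_succ, mul_left_comm, NNRat.den_mul_eq_num, mul_comm]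

theorem NNRat.two_le_den_of_forall_ne_natCast {b : ℚ≥0} (hb : ∀ n : ℕ, b ≠ n) : 2 ≤ b.den := by
  by_contra h
  have h1 : b.den = 1 := by have := b.den_pos; omega
  have := b.mul_den_eq_num
  rw [h1, Nat.cast_one, mul_one] at this
  exact hb b.num this

theorem Relation.ReflTransGen.modEq_and_exists_eq_add {α : Type*} {r : α → α → Prop}
    {f : α → ℕ} {δ : ℕ} (hr : ∀ a b, r a b → f b = f a + δ ∨ f a = f b + δ) {a b : α}
    (h : ReflTransGen r a b) :
    f b ≡ f a [MOD δ] ∧ (f a < f b → ∃ c, ReflTransGen r a c ∧ f c = f a + δ) := by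
  induction h with
  | refl => exact ⟨rfl, fun h => absurd h (lt_irrefl _)⟩
  | @tail b c hab hbc ih =>
    obtain ⟨hmod, hup⟩ := ih
    rcases hr b c hbc with hc | hc
    · refine ⟨by rw [hc]; exact Nat.add_modulus_modEq_iff.2 hmod, fun hlt => ?_⟩
      by_cases hb : f a < f b
      · exact hup hb
      · -- `f b ≤ f a < f b + δ` and `f a ≡ f b`, so the walk is back at `f a` just before `c`
        have hab' : f b = f a := hmod.eq_of_abs_lt (by rw [abs_lt]; omega)
        exact ⟨c, hab.tail hbc, by omega⟩
    · refine ⟨Nat.add_modulus_modEq_iff.1 (hc ▸ hmod), fun hlt => hup (by omega)⟩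

def coprimeDenSubring (q : ℕ) : Subring ℚ where
  carrier := {x | x.den.Coprime q}
  mul_mem' hx hy := Nat.Coprime.coprime_dvd_left (Rat.mul_den_dvd _ _) (hx.mul_left hy)
  one_mem' := Nat.coprime_one_left q
  add_mem' hx hy := Nat.Coprime.coprime_dvd_left (Rat.add_den_dvd _ _) (hx.mul_left hy)
  zero_mem' := Nat.coprime_one_left q
  neg_mem' hx := by simpa only [Set.mem_ofPred_eq, Rat.den_neg_eq_den] using hx

theorem mem_coprimeDenSubring {q : ℕ} {x : ℚ} : x ∈ coprimeDenSubring q ↔ x.den.Coprime q :=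
  Iff.rfl

theorem dvd_of_sum_mul_pow_mem_coprimeDenSubring (b : ℚ) (e : ℕ → ℤ) {L : ℕ} (hL : L ≠ 0)
    (h : ∑ m ∈ Finset.range (L + 1), (e m : ℚ) * b ^ m ∈ coprimeDenSubring b.den) :
    (b.den : ℤ) ∣ e L := by
  set S := ∑ m ∈ Finset.range (L + 1), (e m : ℚ) * b ^ m
  set A : ℤ := ∑ m ∈ Finset.range (L + 1), e m * b.num ^ m * b.den ^ (L - m)
  have hA : (A : ℚ) = b.den ^ L * S := by
    simp only [A, S, Int.cast_sum, Int.cast_mul, Int.cast_pow, Int.cast_natCast, Finset.mul_sum]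
    refine Finset.sum_congr rfl fun m hm => ?_
    have hmL : L = m + (L - m) := by have := Finset.mem_range.1 hm; omega
    rw [← Rat.mul_den_eq_num, mul_pow]
    conv_rhs => rw [hmL, pow_add]
    ring
  have hSA : (S.den : ℤ) * A = b.den ^ L * S.num := by
    have : (S.den : ℚ) * A = b.den ^ L * S.num := by
      rw [hA, ← Rat.mul_den_eq_num]; ring
    exact_mod_cast this
  have hdvdA : (b.den : ℤ) ∣ A := by
    have hcop : IsCoprime (b.den : ℤ) S.den := Nat.isCoprime_iff_coprime.2 h.symm
    refine hcop.dvd_of_dvd_mul_left ⟨b.den ^ (L - 1) * S.num, ?_⟩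
    rw [hSA, ← mul_assoc, ← pow_succ', Nat.sub_add_cancel (Nat.one_le_iff_ne_zero.2 hL)]
  -- all terms of `A` but the top one carry a factor `b.den`
  have hlow : (b.den : ℤ) ∣ A - e L * b.num ^ L := by
    simp only [A, Finset.sum_range_succ, Nat.sub_self, pow_zero, mul_one, add_sub_cancel_right]
    exact Finset.dvd_sum fun m hm =>
      dvd_mul_of_dvd_right (dvd_pow_self _ (by have := Finset.mem_range.1 hm; omega)) _
  have htop : (b.den : ℤ) ∣ e L * b.num ^ L := by simpa using dvd_sub hdvdA hlow
  have hcop : IsCoprime (b.den : ℤ) (b.num ^ L) := by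
    refine IsCoprime.pow_right ?_
    rw [Int.isCoprime_iff_gcd_eq_one, Int.gcd_comm]
    exact b.reduced
  exact hcop.dvd_of_dvd_mul_right htop

theorem PMatoms_closure_subset (S : Set ℚ≥0) : PMatoms (AddSubmonoid.closure S) ⊆ S := by
  rintro a ⟨ha, ha0, hirr⟩
  suffices ∀ x ∈ AddSubmonoid.closure S, x = 0 ∨ x ∈ S ∨ ∃ y ∈ AddSubmonoid.closure S,
      ∃ z ∈ AddSubmonoid.closure S, y ≠ 0 ∧ z ≠ 0 ∧ x = y + z by
    rcases this a ha with h | h | ⟨y, hy, z, hz, hy0, hz0, h⟩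
    exacts [absurd h ha0, h, absurd h (hirr y hy z hz hy0 hz0)]
  intro x hx
  induction hx using AddSubmonoid.closure_induction with
  | mem x hx => exact .inr (.inl hx)
  | zero => exact .inl rfl
  | add x y hx hy ihx ihy =>
    rcases eq_or_ne x 0 with rfl | hx0
    · simpa using ihy
    rcases eq_or_ne y 0 with rfl | hy0
    · simpa using ihx
    exact .inr (.inr ⟨x, hx, y, hy, hx0, hy0, rfl⟩)

theorem num_ne_one_of_pow_mem_PMatoms {M : AddSubmonoid ℚ≥0} {b : ℚ≥0} (hb : 2 ≤ b.den)
    {m : ℕ} (hmem : b ^ (m + 1) ∈ M) (ha : b ^ m ∈ PMatoms M) : b.num ≠ 1 := by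
  intro h1
  have hpow : b ^ (m + 1) ≠ 0 := (pow_pos (NNRat.pos_of_two_le_den hb) _).ne'
  refine ha.2.2 _ hmem ((b.den - 1) • b ^ (m + 1)) (nsmul_mem hmem _) hpow
    (smul_ne_zero (by omega) hpow) ?_
  rw [← succ_nsmul', Nat.sub_add_cancel (by omega), NNRat.den_nsmul_pow_succ, h1, one_nsmul]

def basePowers (B : Set ℚ≥0) : Set ℚ≥0 := {q | ∃ b ∈ B, ∃ n : ℕ, q = b ^ n}

def PowerStep (B : Set ℚ≥0) (u v : Multiset ℚ≥0) : Prop :=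
  ∃ b ∈ B, ∃ m : ℕ, ∃ w : Multiset ℚ≥0,
    u = w + replicate b.den (b ^ (m + 1)) ∧ v = w + replicate b.num (b ^ m)

def IsPowerReduced (B : Set ℚ≥0) (u : Multiset ℚ≥0) : Prop :=
  ∀ b ∈ B, ∀ m : ℕ, u.count (b ^ (m + 1)) < b.den

section PowerRewriting

variable {B : Set ℚ≥0} {u v : Multiset ℚ≥0}

theorem PowerStep.sum_eq (h : PowerStep B u v) : v.sum = u.sum := by
  obtain ⟨b, -, m, w, rfl, rfl⟩ := h
  simp only [sum_add, sum_replicate, NNRat.den_nsmul_pow_succ]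

theorem PowerStep.card_add_den (h : PowerStep B u v) :
    ∃ b ∈ B, v.card + b.den = u.card + b.num := by
  obtain ⟨b, hb, m, w, rfl, rfl⟩ := h
  exact ⟨b, hb, by simp only [card_add, card_replicate]; omega⟩

theorem PowerStep.subset_basePowers_iff (h : PowerStep B u v) :
    (∀ a ∈ u, a ∈ basePowers B) ↔ (∀ a ∈ v, a ∈ basePowers B) := by
  obtain ⟨b, hb, m, w, rfl, rfl⟩ := h
  have hpow : ∀ k j, ∀ a ∈ replicate k (b ^ j), a ∈ basePowers B :=
    fun _ j _ ha => ⟨b, hb, j, eq_of_mem_replicate ha⟩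
  simp only [mem_add, or_imp, forall_and]
  exact ⟨fun h => ⟨h.1, hpow _ _⟩, fun h => ⟨h.1, hpow _ _⟩⟩

theorem PowerStep.not_singleton (hnum : ∀ b ∈ B, 1 < b.num) (a : ℚ≥0) :
    ¬ PowerStep B u {a} := by
  rintro ⟨b, hb, m, w, -, hw⟩
  have := congrArg card hw
  simp only [card_singleton, card_add, card_replicate] at this
  have := hnum b hb
  omega

theorem exists_powerStep_isPowerReduced (hden : ∀ b ∈ B, 2 ≤ b.den) (u : Multiset ℚ≥0) :
    ∃ r, ReflTransGen (PowerStep B) u r ∧ IsPowerReduced B r := by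
  induction hu : (u.map NNRat.num).sum using Nat.strong_induction_on generalizing u with
  | _ N ih =>
    by_cases hred : IsPowerReduced B u
    · exact ⟨u, .refl, hred⟩
    simp only [IsPowerReduced, not_forall, not_lt] at hred
    obtain ⟨b, hb, m, hcount⟩ := hred
    obtain ⟨w, rfl⟩ : ∃ w, u = w + replicate b.den (b ^ (m + 1)) :=
      ⟨_, (tsub_add_cancel_of_le (le_count_iff_replicate_le.1 hcount)).symm⟩
    have hstep : PowerStep B (w + replicate b.den (b ^ (m + 1))) (w + replicate b.num (b ^ m)) :=
      ⟨b, hb, m, w, rfl, rfl⟩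
    -- the numerator sum drops from `d(b) * n(b) ^ (m + 1)` to `n(b) ^ (m + 1)`
    have hlt : ((w + replicate b.num (b ^ m)).map NNRat.num).sum < N := by
      subst hu
      simp only [Multiset.map_add, sum_add, map_replicate, sum_replicate, smul_eq_mul,
        NNRat.num_pow, ← pow_succ']
      have := hden b hb
      have : 0 < b.num ^ (m + 1) :=
        pow_pos (NNRat.num_pos.2 (NNRat.pos_of_two_le_den (hden b hb))) _
      nlinarith
    obtain ⟨r, hr, hred⟩ := ih _ hlt _ rfl
    exact ⟨r, hr.head hstep, hred⟩

theorem exists_sum_eq_sum_count_pow_add (hcop : B.Pairwise fun b b' => b.den.Coprime b'.den)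
    {b : ℚ≥0} (hb : b ∈ B) (hb2 : 2 ≤ b.den) {w : Multiset ℚ≥0}
    (hw : ∀ a ∈ w, a ∈ basePowers B) {L : ℕ} (htop : ∀ m, L < m → b ^ m ∉ w) :
    ∃ T ∈ coprimeDenSubring b.den,
      (w.sum : ℚ) = ∑ m ∈ Finset.range (L + 1), (w.count (b ^ m) : ℚ) * (b : ℚ) ^ m + T := by
  classical
  set S := (Finset.range (L + 1)).image (b ^ ·)
  refine ⟨((w.filter (· ∉ S)).sum : ℚ), ?_, ?_⟩
  · rw [← NNRat.coe_coeHom, map_multiset_sum]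
    refine Subring.multiset_sum_mem _ _ fun x hx => ?_
    obtain ⟨a, ha, rfl⟩ := mem_map.1 hx
    obtain ⟨haw, haS⟩ := mem_filter.1 ha
    obtain ⟨b', hb', j, rfl⟩ := hw _ haw
    have hne : b' ≠ b := by
      rintro rfl
      refine haS (Finset.mem_image_of_mem _ (Finset.mem_range.2 ?_))
      by_contra hj
      exact htop j (by omega) haw
    simpa [mem_coprimeDenSubring, NNRat.den_coe] using (hcop hb' hb hne).pow_left j
  · conv_lhs => rw [← filter_add_not (· ∈ S) w]
    rw [sum_add,
      Finset.sum_multiset_count_of_subset _ S fun a ha => (mem_filter.1 (mem_toFinset.1 ha)).2,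
      Finset.sum_image fun m _ j _ h => NNRat.pow_injective_of_two_le_den hb2 h]
    push_cast
    congr 1
    refine Finset.sum_congr rfl fun m hm => ?_
    rw [count_filter_of_pos (Finset.mem_image_of_mem _ hm), nsmul_eq_mul]

theorem count_pow_eq_of_isPowerReduced (hden : ∀ b ∈ B, 2 ≤ b.den)
    (hcop : B.Pairwise fun b b' => b.den.Coprime b'.den)
    (hu : ∀ a ∈ u, a ∈ basePowers B) (hv : ∀ a ∈ v, a ∈ basePowers B)
    (hru : IsPowerReduced B u) (hrv : IsPowerReduced B v) (hsum : u.sum = v.sum)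
    {b : ℚ≥0} (hb : b ∈ B) {L : ℕ} (hL : L ≠ 0) (htop : ∀ m, L < m → b ^ m ∉ u + v) :
    u.count (b ^ L) = v.count (b ^ L) := by
  obtain ⟨Tu, hTu, hsumu⟩ := exists_sum_eq_sum_count_pow_add hcop hb (hden b hb) hu
    fun m hm hmu => htop m hm (mem_add.2 (.inl hmu))
  obtain ⟨Tv, hTv, hsumv⟩ := exists_sum_eq_sum_count_pow_add hcop hb (hden b hb) hv
    fun m hm hmv => htop m hm (mem_add.2 (.inr hmv))
  have hdiff : ∑ m ∈ Finset.range (L + 1),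
      ((u.count (b ^ m) - v.count (b ^ m) : ℤ) : ℚ) * b ^ m = Tv - Tu := by
    have hq : (u.sum : ℚ) = v.sum := congrArg _ hsum
    push_cast [sub_mul, Finset.sum_sub_distrib]
    linarith
  have hdvd := dvd_of_sum_mul_pow_mem_coprimeDenSubring (b : ℚ)
    (fun m => u.count (b ^ m) - v.count (b ^ m)) hL (hdiff ▸ sub_mem hTv hTu)
  rw [NNRat.den_coe] at hdvd
  obtain ⟨L', rfl⟩ : ∃ L', L = L' + 1 := ⟨L - 1, by omega⟩
  have hcu := hru b hb L'
  have hcv := hrv b hb L'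
  have := Int.eq_zero_of_abs_lt_dvd hdvd (by rw [abs_lt]; omega)
  omega

theorem eq_zero_of_isPowerReduced_of_disjoint (hden : ∀ b ∈ B, 2 ≤ b.den)
    (hcop : B.Pairwise fun b b' => b.den.Coprime b'.den)
    (hu : ∀ a ∈ u, a ∈ basePowers B) (hv : ∀ a ∈ v, a ∈ basePowers B)
    (hru : IsPowerReduced B u) (hrv : IsPowerReduced B v) (hdisj : Disjoint u v)
    (hsum : u.sum = v.sum) : u = 0 := by
  by_cases hpow : ∃ b ∈ B, ∃ m, 0 < m ∧ b ^ m ∈ u + v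
  · exfalso
    obtain ⟨b, hb, m, hm, hmem⟩ := hpow
    obtain ⟨L, hL, hLmax⟩ := ((u + v).toFinset.preimage (b ^ ·)
      (NNRat.pow_injective_of_two_le_den (hden b hb)).injOn).exists_max_image id
      ⟨m, Finset.mem_preimage.2 (mem_toFinset.2 hmem)⟩
    simp only [Finset.mem_preimage, mem_toFinset, id] at hL hLmax
    have hL0 : L ≠ 0 := by have := hLmax m hmem; omega
    have hcount := count_pow_eq_of_isPowerReduced hden hcop hu hv hru hrv hsum hb hL0
      fun j hj hjuv => by have := hLmax j hjuv; omega
    rcases mem_add.1 hL with hLu | hLv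
    · exact disjoint_left.1 hdisj hLu (count_pos.1 (hcount ▸ count_pos.2 hLu))
    · exact disjoint_left.1 hdisj (count_pos.1 (hcount ▸ count_pos.2 hLv)) hLv
  · push Not at hpow
    have hone : ∀ a ∈ u + v, a = 1 := by
      intro a ha
      obtain ⟨b, hb, j, rfl⟩ := (mem_add.1 ha).elim (hu _) (hv _)
      rcases Nat.eq_zero_or_pos j with rfl | hj
      · exact pow_zero b
      · exact absurd ha (hpow b hb j hj)
    have hu1 := eq_replicate_card.2 fun a ha => hone a (mem_add.2 (.inl ha))
    have hv1 := eq_replicate_card.2 fun a ha => hone a (mem_add.2 (.inr ha))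
    have hcard : u.card = v.card := by
      rw [hu1, hv1] at hsum
      simpa using hsum
    refine card_eq_zero.1 (Nat.eq_zero_of_not_pos fun hpos => ?_)
    refine disjoint_left.1 hdisj (show (1 : ℚ≥0) ∈ u from ?_) (show (1 : ℚ≥0) ∈ v from ?_)
    · rw [hu1]; exact mem_replicate.2 ⟨by omega, rfl⟩
    · rw [hv1]; exact mem_replicate.2 ⟨by omega, rfl⟩

theorem eq_of_isPowerReduced (hden : ∀ b ∈ B, 2 ≤ b.den)
    (hcop : B.Pairwise fun b b' => b.den.Coprime b'.den)
    (hu : ∀ a ∈ u, a ∈ basePowers B) (hv : ∀ a ∈ v, a ∈ basePowers B)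
    (hru : IsPowerReduced B u) (hrv : IsPowerReduced B v) (hsum : u.sum = v.sum) : u = v := by
  classical
  have hsub {s t : Multiset ℚ≥0} (hs : ∀ a ∈ s, a ∈ basePowers B) (hrs : IsPowerReduced B s) :
      (∀ a ∈ s - t, a ∈ basePowers B) ∧ IsPowerReduced B (s - t) :=
    ⟨fun a ha => hs a (mem_of_le tsub_le_self ha),
      fun b hb m => (count_le_of_le _ tsub_le_self).trans_lt (hrs b hb m)⟩
  have hdisj : Disjoint (u - v) (v - u) := disjoint_left.2 fun ha hb => by
    rw [mem_sub] at ha hb; omega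
  have hsum' : (u - v).sum = (v - u).sum := by
    refine add_right_cancel (b := (u ∩ v).sum) ?_
    rw [← sum_add, ← sum_add, sub_add_inter, inter_comm, sub_add_inter, hsum]
  have huv := eq_zero_of_isPowerReduced_of_disjoint hden hcop (hsub hu hru).1 (hsub hv hrv).1
    (hsub hu hru).2 (hsub hv hrv).2 hdisj hsum'
  have hvu := eq_zero_of_isPowerReduced_of_disjoint hden hcop (hsub hv hrv).1 (hsub hu hru).1
    (hsub hv hrv).2 (hsub hu hru).2 hdisj.symm hsum'.symm
  exact le_antisymm (tsub_eq_zero_iff_le.1 huv) (tsub_eq_zero_iff_le.1 hvu)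

theorem sum_eq_and_basePowers_iff_of_reflTransGen
    (h : ReflTransGen (SymmGen (PowerStep B)) u v) :
    v.sum = u.sum ∧ ((∀ a ∈ u, a ∈ basePowers B) ↔ ∀ a ∈ v, a ∈ basePowers B) := by
  induction h with
  | refl => exact ⟨rfl, .rfl⟩
  | tail _ hvw ih =>
    rcases hvw with h | h
    · exact ⟨h.sum_eq.trans ih.1, ih.2.trans h.subset_basePowers_iff⟩
    · exact ⟨h.sum_eq.symm.trans ih.1, ih.2.trans h.subset_basePowers_iff.symm⟩

theorem reflTransGen_symmGen_powerStep_of_sum_eq (hden : ∀ b ∈ B, 2 ≤ b.den)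
    (hcop : B.Pairwise fun b b' => b.den.Coprime b'.den) {s t : Multiset ℚ≥0}
    (hs : ∀ a ∈ s, a ∈ basePowers B) (ht : ∀ a ∈ t, a ∈ basePowers B) (hst : s.sum = t.sum) :
    ReflTransGen (SymmGen (PowerStep B)) s t := by
  obtain ⟨r, hsr, hr⟩ := exists_powerStep_isPowerReduced hden s
  obtain ⟨r', htr', hr'⟩ := exists_powerStep_isPowerReduced hden t
  replace hsr := ReflTransGen.mono (fun _ _ => SymmGen.of_rel) _ _ hsr
  replace htr' := ReflTransGen.mono (fun _ _ => SymmGen.of_rel) _ _ htr'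
  obtain ⟨hsum, hgen⟩ := sum_eq_and_basePowers_iff_of_reflTransGen hsr
  obtain ⟨hsum', hgen'⟩ := sum_eq_and_basePowers_iff_of_reflTransGen htr'
  obtain rfl : r = r' := eq_of_isPowerReduced hden hcop (hgen.1 hs) (hgen'.1 ht) hr hr'
    (by rw [hsum, hsum', hst])
  exact hsr.trans (Std.Symm.symm _ _ htr')

theorem card_modEq_and_exists_card_eq_add (hden : ∀ b ∈ B, 2 ≤ b.den)
    (hcop : B.Pairwise fun b b' => b.den.Coprime b'.den) {δ : ℕ}
    (hδ : ∀ b ∈ B, ((b.num : ℤ) - b.den).natAbs = δ) {s t : Multiset ℚ≥0}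
    (hs : ∀ a ∈ s, a ∈ basePowers B) (ht : ∀ a ∈ t, a ∈ basePowers B) (hst : s.sum = t.sum) :
    t.card ≡ s.card [MOD δ] ∧ (s.card < t.card →
      ∃ u : Multiset ℚ≥0, (∀ a ∈ u, a ∈ basePowers B) ∧ u.sum = s.sum ∧ u.card = s.card + δ) := by
  have hcard : ∀ u v, SymmGen (PowerStep B) u v → v.card = u.card + δ ∨ u.card = v.card + δ := by
    rintro u v (h | h) <;> obtain ⟨b, hb, hc⟩ := h.card_add_den <;> have := hδ b hb <;> omega
  obtain ⟨hmod, hup⟩ :=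
    (reflTransGen_symmGen_powerStep_of_sum_eq hden hcop hs ht hst).modEq_and_exists_eq_add hcard
  refine ⟨hmod, fun hlt => ?_⟩
  obtain ⟨u, hsu, hu⟩ := hup hlt
  obtain ⟨hsum, hgen⟩ := sum_eq_and_basePowers_iff_of_reflTransGen hsu
  exact ⟨u, hgen.1 hs, hsum, hu⟩

theorem one_lt_num_of_PMatoms_nonempty (hden : ∀ b ∈ B, 2 ≤ b.den)
    (hnum : B.Pairwise fun b _ => 1 < b.num)
    (h : (PMatoms (AddSubmonoid.closure (basePowers B))).Nonempty) : ∀ b ∈ B, 1 < b.num := by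
  obtain ⟨a, ha⟩ := h
  obtain ⟨b₀, hb₀, m, rfl⟩ := PMatoms_closure_subset _ ha
  have hb₀num : 1 < b₀.num := by
    have := num_ne_one_of_pow_mem_PMatoms (hden b₀ hb₀)
      (AddSubmonoid.subset_closure (⟨b₀, hb₀, m + 1, rfl⟩ : b₀ ^ (m + 1) ∈ basePowers B)) ha
    have := NNRat.num_pos.2 (NNRat.pos_of_two_le_den (hden b₀ hb₀))
    omega
  intro b hb
  rcases eq_or_ne b b₀ with rfl | hne
  exacts [hb₀num, hnum hb hb₀ hne]

theorem basePowers_subset_PMatoms (hden : ∀ b ∈ B, 2 ≤ b.den)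
    (hcop : B.Pairwise fun b b' => b.den.Coprime b'.den) (hnum : ∀ b ∈ B, 1 < b.num) :
    basePowers B ⊆ PMatoms (AddSubmonoid.closure (basePowers B)) := by
  rintro _ ⟨b, hb, n, rfl⟩
  refine ⟨AddSubmonoid.subset_closure ⟨b, hb, n, rfl⟩,
    (pow_pos (NNRat.pos_of_two_le_den (hden b hb)) n).ne', ?_⟩
  rintro _ hy _ hz hy0 hz0 hyz
  obtain ⟨sy, hsy, rfl⟩ := AddSubmonoid.exists_multiset_of_mem_closure hy
  obtain ⟨sz, hsz, rfl⟩ := AddSubmonoid.exists_multiset_of_mem_closure hz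
  have hred : IsPowerReduced B {b ^ n} := fun b' hb' m =>
    (count_le_card _ _).trans_lt (by have := hden b' hb'; simp only [card_singleton]; omega)
  obtain ⟨r, hr, hrred⟩ := exists_powerStep_isPowerReduced hden (sy + sz)
  obtain ⟨hsum, hgen⟩ := sum_eq_and_basePowers_iff_of_reflTransGen
    (ReflTransGen.mono (fun _ _ => SymmGen.of_rel) _ _ hr)
  obtain rfl : r = {b ^ n} := eq_of_isPowerReduced hden hcop
    (hgen.1 fun a ha => (mem_add.1 ha).elim (hsy a) (hsz a))
    (fun a ha => by rw [mem_singleton.1 ha]; exact ⟨b, hb, n, rfl⟩) hrred hred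
    (by rw [hsum, sum_add, sum_singleton, hyz])
  -- every step ends in at least `b.num ≥ 2` elements, so the chain must be trivial
  rcases hr.cases_tail with h | ⟨c, -, hc⟩
  · have hy : sy ≠ 0 := by rintro rfl; exact hy0 sum_zero
    have hz : sz ≠ 0 := by rintro rfl; exact hz0 sum_zero
    have := congrArg card h
    rw [card_singleton, card_add] at this
    have := card_pos.2 hy
    have := card_pos.2 hz
    omega
  · exact hc.not_singleton hnum _

end PowerRewriting

theorem PMdistances_subset_singleton_s15 {M : AddSubmonoid ℚ≥0} {x : ℚ≥0} {δ : ℕ}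
    (h : ∀ l ∈ PMlengths M x, ∀ l' ∈ PMlengths M x, l < l' →
      l' ≡ l [MOD δ] ∧ l + δ ∈ PMlengths M x) :
    PMdistances M x ⊆ {δ} := by
  rintro d ⟨hd, l, hl, hIcc⟩
  have hld : l + d ∈ PMlengths M x ∩ Set.Icc l (l + d) := hIcc ▸ Set.mem_insert_of_mem _ rfl
  obtain ⟨hmod, hlδ⟩ := h l hl (l + d) hld.1 (by omega)
  have hδd : δ ∣ d := Nat.add_modEq_left_iff.1 hmod
  have : l + δ ∈ ({l, l + d} : Set ℕ) :=
    hIcc ▸ ⟨hlδ, by omega, Nat.add_le_add_left (Nat.le_of_dvd hd hδd) l⟩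
  rcases this with h | h
  · obtain rfl : δ = 0 := by omega
    exact absurd (Nat.eq_zero_of_zero_dvd hδd) hd.ne'
  · exact (Nat.add_left_cancel h).symm

theorem stmt15_general (B : Set ℚ≥0)
    (hB : ∀ b ∈ B, 0 < b ∧ ∀ n : ℕ, b ≠ (n : ℚ≥0))
    (hcond : ∀ b ∈ B, ∀ b' ∈ B, b ≠ b' →
      1 < b.num ∧ Nat.gcd b.den b'.den = 1 ∧
      ((b.num : ℤ) - (b.den : ℤ)).natAbs = ((b'.num : ℤ) - (b'.den : ℤ)).natAbs)
    (b₁ : ℚ≥0) (hb₁ : b₁ ∈ B)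
    (MB : AddSubmonoid ℚ≥0)
    (hMB : MB = AddSubmonoid.closure {q : ℚ≥0 | ∃ b ∈ B, ∃ n : ℕ, q = b ^ n}) :
    PMDelta MB ⊆ {((b₁.num : ℤ) - (b₁.den : ℤ)).natAbs} := by
  replace hMB : MB = AddSubmonoid.closure (basePowers B) := hMB
  subst hMB
  have hden : ∀ b ∈ B, 2 ≤ b.den := fun b hb => NNRat.two_le_den_of_forall_ne_natCast (hB b hb).2
  have hcop : B.Pairwise fun b b' => b.den.Coprime b'.den :=
    fun b hb b' hb' hne => (hcond b hb b' hb' hne).2.1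
  have hδ : ∀ b ∈ B, ((b.num : ℤ) - b.den).natAbs = ((b₁.num : ℤ) - b₁.den).natAbs := by
    intro b hb
    rcases eq_or_ne b b₁ with rfl | hne
    exacts [rfl, (hcond b hb b₁ hb₁ hne).2.2]
  refine Set.iUnion₂_subset fun x _ => PMdistances_subset_singleton_s15 ?_
  rintro l ⟨s, ⟨hs, hsx⟩, rfl⟩ l' ⟨t, ⟨ht, htx⟩, rfl⟩ hlt
  obtain ⟨a, ha⟩ := card_pos_iff_exists_mem.1 (Nat.zero_lt_of_lt hlt)
  have hnum := one_lt_num_of_PMatoms_nonempty hden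
    (fun b hb b' hb' hne => (hcond b hb b' hb' hne).1) ⟨a, ht a ha⟩
  have hatoms : PMatoms (AddSubmonoid.closure (basePowers B)) = basePowers B :=
    (PMatoms_closure_subset _).antisymm (basePowers_subset_PMatoms hden hcop hnum)
  rw [hatoms] at hs ht
  obtain ⟨hmod, hup⟩ := card_modEq_and_exists_card_eq_add hden hcop hδ hs ht (hsx.trans htx.symm)
  obtain ⟨u, hu, husum, hucard⟩ := hup hlt
  exact ⟨hmod, u, ⟨fun a ha => by rw [hatoms]; exact hu a ha, husum.trans hsx⟩, hucard⟩

theorem stmt15 (B : Set ℚ≥0) (hne : B.Nonempty)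
    (hB : ∀ b ∈ B, 0 < b ∧ ∀ n : ℕ, b ≠ (n : ℚ≥0))
    (hcond : ∀ b ∈ B, ∀ b' ∈ B, b ≠ b' →
      1 < b.num ∧ Nat.gcd b.den b'.den = 1 ∧
      ((b.num : ℤ) - (b.den : ℤ)).natAbs = ((b'.num : ℤ) - (b'.den : ℤ)).natAbs)
    (b₁ : ℚ≥0) (hb₁ : b₁ ∈ B)
    (MB : AddSubmonoid ℚ≥0)
    (hMB : MB = AddSubmonoid.closure {q : ℚ≥0 | ∃ b ∈ B, ∃ n : ℕ, q = b ^ n}) :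
    PMDelta MB ⊆ {((b₁.num : ℤ) - (b₁.den : ℤ)).natAbs} :=
  stmt15_general B hB hcond b₁ hb₁ MB hMB
end
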